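/- arXiv:1310.0657 — 6 statements merged into one kernel-verified Lean document; each statement's English description precedes it below -/
import Mathlib

section
/- Let X₁ and X₂ be independent random variables (with values in arbitrary measurable spaces), and let Y₂ be a random variable independent of the pair (X₁, X₂) and with the same distribution as X₂. Let g be a measurable real-valued function such that g(X₁,X₂) is square-integrable. Then E(g(X₁,X₂)·g(X₁,Y₂)) = E( (E(g(X₁,X₂)|X₁))² ) and Cov(g(X₁,X₂), g(X₁,Y₂)) = Var( E(g(X₁,X₂)|X₁) ). -/
/-!
Put `h x = ∫ g (x, y) d(law X₂)`. Independence of `X₁` and `X₂` gives `E(g(X₁,X₂) | X₁) = h(X₁)`,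
and since `Y₂` is independent of `(X₁, X₂)` with the law of `X₂`, also
`E(g(X₁,Y₂) | X₁, X₂) = h(X₁)`. Pulling out the known factor, first given `(X₁, X₂)` and then
given `X₁`, yields `E(g(X₁,X₂) g(X₁,Y₂)) = E(g(X₁,X₂) h(X₁)) = E(h(X₁)²)`. The covariance identity
follows because `g(X₁,Y₂)`, `g(X₁,X₂)` and `E(g(X₁,X₂) | X₁)` all have the same mean.
-/

open MeasureTheory ProbabilityTheory

theorem ProbabilityTheory.IndepFun.condExp_prod_ae_eq_integral_map {Ω α β E : Type*}
    {mΩ : MeasurableSpace Ω} {mα : MeasurableSpace α} {mβ : MeasurableSpace β}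
    [NormedAddCommGroup E] [NormedSpace ℝ E] [CompleteSpace E] {μ : Measure Ω}
    [IsFiniteMeasure μ] {X : Ω → α} {Y : Ω → β} (hXY : IndepFun X Y μ) (hX : Measurable X)
    (hY : AEMeasurable Y μ) {f : α × β → E} (hf : StronglyMeasurable f)
    (hf_int : Integrable (fun ω => f (X ω, Y ω)) μ) :
    μ[fun ω => f (X ω, Y ω) | mα.comap X] =ᵐ[μ] fun ω => ∫ y, f (X ω, y) ∂(μ.map Y) := by
  have hlaw : μ.map (fun ω => (X ω, Y ω)) = (μ.map X).prod (μ.map Y) :=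
    (indepFun_iff_map_prod_eq_prod_map_map hX.aemeasurable hY).mp hXY
  have hf_int' : Integrable f ((μ.map X).prod (μ.map Y)) := by
    rwa [← hlaw, integrable_map_measure hf.aestronglyMeasurable (hX.aemeasurable.prodMk hY)]
  have hh : StronglyMeasurable fun x => ∫ y, f (x, y) ∂(μ.map Y) := hf.integral_prod_right'
  refine (ae_eq_condExp_of_forall_setIntegral_eq hX.comap_le hf_int (fun s _ _ => ?_) ?_ ?_).symm
  · exact ((integrable_map_measure hh.aestronglyMeasurable hX.aemeasurable).mp
      hf_int'.integral_prod_left).integrableOn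
  · rintro s ⟨t, ht, rfl⟩ -
    calc ∫ ω in X ⁻¹' t, ∫ y, f (X ω, y) ∂(μ.map Y) ∂μ
        = ∫ x in t, ∫ y, f (x, y) ∂(μ.map Y) ∂(μ.map X) :=
          (setIntegral_map ht hh.aestronglyMeasurable hX.aemeasurable).symm
      _ = ∫ p in t ×ˢ Set.univ, f p ∂((μ.map X).prod (μ.map Y)) := by
          rw [setIntegral_prod f hf_int'.integrableOn, Measure.restrict_univ]
      _ = ∫ ω in X ⁻¹' t, f (X ω, Y ω) ∂μ := by
          rw [← hlaw, setIntegral_map (ht.prod MeasurableSet.univ) hf.aestronglyMeasurable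
            (hX.aemeasurable.prodMk hY), Set.mk_preimage_prod, Set.preimage_univ, Set.inter_univ]
  · exact (hh.comp_measurable (Measurable.of_comap_le le_rfl)).aestronglyMeasurable

theorem integral_mul_condExp {Ω : Type*} {m mΩ : MeasurableSpace Ω} {μ : Measure Ω}
    (hm : m ≤ mΩ) [SigmaFinite (μ.trim hm)] {f g : Ω → ℝ} (hf : AEStronglyMeasurable[m] f μ)
    (hfg : Integrable (f * g) μ) (hg : Integrable g μ) :
    ∫ ω, f ω * μ[g | m] ω ∂μ = ∫ ω, f ω * g ω ∂μ := by
  calc ∫ ω, f ω * μ[g | m] ω ∂μ = ∫ ω, μ[f * g | m] ω ∂μ :=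
        integral_congr_ae (condExp_mul_of_aestronglyMeasurable_left hf hfg hg).symm
    _ = ∫ ω, f ω * g ω ∂μ := integral_condExp hm

theorem integral_mul_eq_integral_condExp_sq {Ω α β : Type*} {mΩ : MeasurableSpace Ω}
    {mα : MeasurableSpace α} {mβ : MeasurableSpace β} {μ : Measure Ω} [IsFiniteMeasure μ]
    {X₁ : Ω → α} {X₂ Y₂ : Ω → β} (hX₁ : Measurable X₁) (hX₂ : Measurable X₂)
    (hY₂ : Measurable Y₂) (hindep : IndepFun X₁ X₂ μ)
    (hYindep : IndepFun (fun ω => (X₁ ω, X₂ ω)) Y₂ μ) (hYdist : IdentDistrib Y₂ X₂ μ μ)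
    {g : α × β → ℝ} (hg : Measurable g) (hV : MemLp (fun ω => g (X₁ ω, X₂ ω)) 2 μ)
    (hW : MemLp (fun ω => g (X₁ ω, Y₂ ω)) 2 μ) :
    ∫ ω, g (X₁ ω, X₂ ω) * g (X₁ ω, Y₂ ω) ∂μ =
      ∫ ω, (μ[fun ω => g (X₁ ω, X₂ ω) | mα.comap X₁] ω) ^ 2 ∂μ := by
  set h : α → ℝ := fun x => ∫ y, g (x, y) ∂(μ.map X₂)
  have hVh : μ[fun ω => g (X₁ ω, X₂ ω) | mα.comap X₁] =ᵐ[μ] fun ω => h (X₁ ω) :=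
    hindep.condExp_prod_ae_eq_integral_map hX₁ hX₂.aemeasurable hg.stronglyMeasurable
      (hV.integrable one_le_two)
  have hWh : μ[fun ω => g (X₁ ω, Y₂ ω) |
      MeasurableSpace.comap (fun ω => (X₁ ω, X₂ ω)) inferInstance] =ᵐ[μ] fun ω => h (X₁ ω) := by
    have := hYindep.condExp_prod_ae_eq_integral_map (hX₁.prodMk hX₂) hY₂.aemeasurable
      (f := fun p => g (p.1.1, p.2)) (hg.comp (by fun_prop)).stronglyMeasurable
      (hW.integrable one_le_two)
    rwa [hYdist.map_eq] at this
  have hh2 : MemLp (fun ω => h (X₁ ω)) 2 μ := (hV.condExp one_le_two).ae_eq hVh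
  calc ∫ ω, g (X₁ ω, X₂ ω) * g (X₁ ω, Y₂ ω) ∂μ
      = ∫ ω, g (X₁ ω, X₂ ω) * h (X₁ ω) ∂μ := by
        rw [← integral_mul_condExp (f := fun ω => g (X₁ ω, X₂ ω)) (hX₁.prodMk hX₂).comap_le
          (hg.comp (Measurable.of_comap_le le_rfl)).aestronglyMeasurable
          (hV.integrable_mul hW) (hW.integrable one_le_two)]
        exact integral_congr_ae (hWh.mono fun ω hω => congrArg (g (X₁ ω, X₂ ω) * ·) hω)
    _ = ∫ ω, h (X₁ ω) * μ[fun ω => g (X₁ ω, X₂ ω) | mα.comap X₁] ω ∂μ := by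
        simp_rw [mul_comm _ (h _)]
        exact (integral_mul_condExp hX₁.comap_le
          (hg.stronglyMeasurable.integral_prod_right'.comp_measurable
            (Measurable.of_comap_le le_rfl)).aestronglyMeasurable
          (hh2.integrable_mul hV) (hV.integrable one_le_two)).symm
    _ = ∫ ω, (μ[fun ω => g (X₁ ω, X₂ ω) | mα.comap X₁] ω) ^ 2 ∂μ :=
        integral_congr_ae (hVh.mono fun ω hω => by dsimp only; rw [sq, hω])

/-- Theorem: if `X₁ ⟂ X₂`, `Y₂ ⟂ (X₁, X₂)`, `Y₂ ~ X₂` and `g(X₁,X₂)` is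
square-integrable, then `E(g(X₁,X₂)·g(X₁,Y₂)) = E((E(g(X₁,X₂)|X₁))²)` and
`Cov(g(X₁,X₂), g(X₁,Y₂)) = Var(E(g(X₁,X₂)|X₁))`, with
`Cov(V,W) = E((V − E V)(W − E W))` and `Var(V) = Cov(V,V)`. -/
theorem stmt1 {Ω α β : Type*} [MeasurableSpace Ω] [MeasurableSpace α] [MeasurableSpace β]
    (μ : Measure Ω) [IsProbabilityMeasure μ]
    (X₁ : Ω → α) (X₂ Y₂ : Ω → β)
    (hX₁ : Measurable X₁) (hX₂ : Measurable X₂) (hY₂ : Measurable Y₂)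
    (hindep : IndepFun X₁ X₂ μ)
    (hYindep : IndepFun (fun ω => (X₁ ω, X₂ ω)) Y₂ μ)
    (hYdist : IdentDistrib Y₂ X₂ μ μ)
    (g : α × β → ℝ) (hg : Measurable g)
    (hg2 : MemLp (fun ω => g (X₁ ω, X₂ ω)) 2 μ) :
    (∫ ω, g (X₁ ω, X₂ ω) * g (X₁ ω, Y₂ ω) ∂μ =
      ∫ ω, ((MeasureTheory.condExp (MeasurableSpace.comap X₁ inferInstance) μ
        (fun ω' => g (X₁ ω', X₂ ω'))) ω) ^ 2 ∂μ) ∧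
    (∫ ω, (g (X₁ ω, X₂ ω) - ∫ ω', g (X₁ ω', X₂ ω') ∂μ) *
        (g (X₁ ω, Y₂ ω) - ∫ ω', g (X₁ ω', Y₂ ω') ∂μ) ∂μ =
      ∫ ω, ((MeasureTheory.condExp (MeasurableSpace.comap X₁ inferInstance) μ
            (fun ω' => g (X₁ ω', X₂ ω'))) ω -
          ∫ ω', (MeasureTheory.condExp (MeasurableSpace.comap X₁ inferInstance) μ
            (fun ω'' => g (X₁ ω'', X₂ ω''))) ω' ∂μ) ^ 2 ∂μ) := by
  have hVW : IdentDistrib (fun ω => g (X₁ ω, X₂ ω)) (fun ω => g (X₁ ω, Y₂ ω)) μ μ :=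
    ((IdentDistrib.refl hX₁.aemeasurable).prodMk hYdist.symm hindep
      (hYindep.comp measurable_fst measurable_id)).comp hg
  have hW2 := hVW.memLp_snd hg2
  have hmoment := integral_mul_eq_integral_condExp_sq hX₁ hX₂ hY₂ hindep hYindep hYdist hg hg2 hW2
  refine ⟨hmoment, ?_⟩
  have hC2 := hg2.condExp one_le_two (m := MeasurableSpace.comap X₁ inferInstance)
  simp_rw [sq]
  change cov[_, _; μ] = cov[_, _; μ]
  rw [covariance_eq_sub hg2 hW2, covariance_eq_sub hC2 hC2, ← hVW.integral_eq,
    integral_condExp hX₁.comap_le]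
  simp only [Pi.mul_apply, ← sq, hmoment]
end

section
/- Let N ∈ ℕ₊ and let X = (X₁,…,X_N) be a random vector with independent coordinates (X_i taking values in a measurable space S_i). Let (Y_{i,j})_{i∈{1,…,N}, j∈ℕ₊} be a jointly independent family of random variables with Y_{i,j} having the same distribution as X_i for every j. Let f be a measurable real-valued function on S₁×…×S_N with f(X) square-integrable. For v ∈ ℕ₊^N write Y_v = (Y_{1,v₁}, …, Y_{N,v_N}), and for a finite nonempty set A ⊂ ℕ₊^N put Z̄ = (1/|A|) Σ_{v∈A} f(Y_v). Then (1/|A|)·Var(f(X)) ≤ Var(Z̄) ≤ Var(f(X)). -/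
/-!
Expanding the variance of the average gives `Var Z̄ = |A|⁻² ∑_{v,w ∈ A} Cov(f(Y_v), f(Y_w))`, and
every `f(Y_v)` has the law of `f(X)`. Each covariance is at most `Var f(X)` since
`2 Cov(U, V) ≤ Var U + Var V`, which gives the upper bound. For the lower bound the diagonal
terms contribute `|A| Var f(X)`, so it suffices that all covariances are nonnegative. Write
`Y_w = m(Y_v, Y_{w'})`, where `w'` uses fresh rows on the coordinates where `v` and `w` agree and
`m` takes those coordinates from its first argument and the others from its second; `Y_v` and
`Y_{w'}` are independent copies of `X`. With `h(x) = E f(m(x, Y_{w'}))`, which only depends on the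
shared coordinates, `E[f(Y_v) f(Y_w)] = E h(X)² ≥ (E h(X))² = (E f(X))²`.
-/

open MeasureTheory ProbabilityTheory

section Integral

variable {α β : Type*} [MeasurableSpace α] [MeasurableSpace β]

lemma sq_integral_le_integral_sq {μ : Measure α} [IsProbabilityMeasure μ] {g : α → ℝ}
    (hg : MemLp g 2 μ) : (∫ x, g x ∂μ) ^ 2 ≤ ∫ x, g x ^ 2 ∂μ := by
  have h := variance_nonneg g μ
  rw [variance_eq_sub hg] at h
  simpa using h

lemma memLp_two_integral_prod_right {μ : Measure α} {ν : Measure β} [SFinite μ]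
    [IsProbabilityMeasure ν] {F : α × β → ℝ} (hF : Measurable F) (hF2 : MemLp F 2 (μ.prod ν)) :
    MemLp (fun x => ∫ y, F (x, y) ∂ν) 2 μ := by
  have hsq := hF2.integrable_sq
  have hmeas := hF.stronglyMeasurable.integral_prod_right' (ν := ν)
  refine (memLp_two_iff_integrable_sq hmeas.aestronglyMeasurable).2 <|
    hsq.integral_prod_left.mono' (hmeas.aestronglyMeasurable.pow 2) ?_
  filter_upwards [hsq.prod_right_ae] with x hx
  rw [Real.norm_eq_abs, abs_of_nonneg (sq_nonneg _)]
  exact sq_integral_le_integral_sq <|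
    (memLp_two_iff_integrable_sq (hF.comp measurable_prodMk_left).aestronglyMeasurable).2 hx

/-- Since `h x = ∫ f (m (x, y)) dy` satisfies `h (m (x, y)) = h x`, it behaves as a conditional
expectation of `f`: `∫ f h = ∫ h²`, and Jensen for `h` gives the bound. -/
theorem sq_integral_le_integral_mul_comp {π : Measure α} [IsProbabilityMeasure π]
    {m : α × α → α} (hm : MeasurePreserving m (π.prod π) π)
    (hmm : ∀ x y z, m (m (x, y), z) = m (x, z)) {f : α → ℝ} (hf : Measurable f)
    (hf2 : MemLp f 2 π) :
    (∫ x, f x ∂π) ^ 2 ≤ ∫ p, f p.1 * f (m p) ∂(π.prod π) := by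
  set h : α → ℝ := fun x => ∫ y, f (m (x, y)) ∂π with h_def
  have hfm : MemLp (fun p => f (m p)) 2 (π.prod π) := hf2.comp_measurePreserving hm
  have hh : MemLp h 2 π := memLp_two_integral_prod_right (hf.comp hm.measurable) hfm
  have h_comp : ∀ x y, h (m (x, y)) = h x := fun x y => by simp only [h_def, hmm]
  have comp_m : ∀ g : α → ℝ, AEStronglyMeasurable g π →
      ∫ p, g (m p) ∂(π.prod π) = ∫ x, g x ∂π := fun g hg => by
    rw [← integral_map hm.measurable.aemeasurable (by rwa [hm.map_eq]), hm.map_eq]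
  have h_integral : ∫ x, h x ∂π = ∫ x, f x ∂π := by
    rw [h_def, ← integral_prod _ (hfm.integrable one_le_two), comp_m f hf.aestronglyMeasurable]
  have h_corr : ∫ p, f p.1 * f (m p) ∂(π.prod π) = ∫ x, f x * h x ∂π := by
    rw [integral_prod (fun p => f p.1 * f (m p))
      ((hf2.comp_measurePreserving measurePreserving_fst).integrable_mul hfm)]
    simp only [h_def, integral_const_mul]
  have h_sq : ∫ x, f x * h x ∂π = ∫ x, h x ^ 2 ∂π := by
    calc ∫ x, f x * h x ∂π = ∫ p, f (m p) * h (m p) ∂(π.prod π) :=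
          (comp_m _ (hf2.integrable_mul hh).aestronglyMeasurable).symm
      _ = ∫ p, h p.1 * f (m p) ∂(π.prod π) := by simp only [h_comp, mul_comm]
      _ = ∫ x, h x ^ 2 ∂π := by
          rw [integral_prod (fun p => h p.1 * f (m p))
            ((hh.comp_measurePreserving measurePreserving_fst).integrable_mul hfm)]
          simp only [h_def, integral_const_mul, sq]
  calc (∫ x, f x ∂π) ^ 2 = (∫ x, h x ∂π) ^ 2 := by rw [h_integral]
    _ ≤ ∫ x, h x ^ 2 ∂π := sq_integral_le_integral_sq hh
    _ = _ := by rw [h_corr, h_sq]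

end Integral

section Probability

variable {Ω : Type*} [MeasurableSpace Ω] {μ : Measure Ω}

lemma ProbabilityTheory.iIndepFun.indepFun_comp_of_disjoint {κ ι₁ ι₂ : Type*}
    [Fintype ι₁] [Fintype ι₂] {β : κ → Type*} [∀ k, MeasurableSpace (β k)] {Z : ∀ k, Ω → β k}
    (hZ : iIndepFun Z μ)
    (hZm : ∀ k, Measurable (Z k)) {g₁ : ι₁ → κ} {g₂ : ι₂ → κ} (hg : ∀ a b, g₁ a ≠ g₂ b) :
    IndepFun (fun ω a => Z (g₁ a) ω) (fun ω b => Z (g₂ b) ω) μ := by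
  classical
  have hdisj : Disjoint (Finset.univ.image g₁) (Finset.univ.image g₂) := by
    simp only [Finset.disjoint_left, Finset.mem_image, Finset.mem_univ, true_and]
    rintro _ ⟨a, rfl⟩ ⟨b, hb⟩
    exact hg a b hb.symm
  refine (hZ.indepFun_finset _ _ hdisj hZm).comp (φ := fun x a => x ⟨g₁ a, by simp⟩)
    (ψ := fun x b => x ⟨g₂ b, by simp⟩) ?_ ?_ <;>
  exact measurable_pi_lambda _ fun _ => measurable_pi_apply _

theorem covariance_comp_nonneg_of_indepFun [IsProbabilityMeasure μ] {E : Type*}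
    [MeasurableSpace E] {P Q : Ω → E} (hP : Measurable P) (hQ : Measurable Q)
    (hPQ : IndepFun P Q μ) (hQP : IdentDistrib Q P μ μ) {m : E × E → E} (hm : Measurable m)
    (hmm : ∀ x y z, m (m (x, y), z) = m (x, z))
    (hmPQ : IdentDistrib (fun ω => m (P ω, Q ω)) P μ μ) {f : E → ℝ} (hf : Measurable f)
    (hf2 : MemLp (fun ω => f (P ω)) 2 μ) :
    0 ≤ cov[fun ω => f (P ω), fun ω => f (m (P ω, Q ω)); μ] := by
  set π := μ.map P
  have : IsProbabilityMeasure π := Measure.isProbabilityMeasure_map hP.aemeasurable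
  have hPQ_law : μ.map (fun ω => (P ω, Q ω)) = π.prod π := by
    rw [hPQ.map_prod_eq_prod_map_map hP.aemeasurable hQ.aemeasurable, hQP.map_eq]
  have hmπ : MeasurePreserving m (π.prod π) π := by
    refine ⟨hm, ?_⟩
    rw [← hPQ_law, Measure.map_map hm (hP.prodMk hQ)]
    exact hmPQ.map_eq
  have hfπ : MemLp f 2 π := (memLp_map_measure_iff hf.aestronglyMeasurable hP.aemeasurable).2 hf2
  have hfm : IdentDistrib (fun ω => f (m (P ω, Q ω))) (fun ω => f (P ω)) μ μ := hmPQ.comp hf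
  rw [covariance_eq_sub hf2 (hfm.memLp_iff.2 hf2), hfm.integral_eq, ← sq, sub_nonneg]
  calc (∫ ω, f (P ω) ∂μ) ^ 2 = (∫ x, f x ∂π) ^ 2 := by
        rw [integral_map hP.aemeasurable hf.aestronglyMeasurable]
    _ ≤ ∫ p, f p.1 * f (m p) ∂(π.prod π) := sq_integral_le_integral_mul_comp hmπ hmm hf hfπ
    _ = _ := by
        rw [← hPQ_law, integral_map (hP.prodMk hQ).aemeasurable (f := fun p => f p.1 * f (m p))
          ((hf.comp measurable_fst).mul (hf.comp hm)).aestronglyMeasurable]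
        rfl

end Probability

section Array

variable {Ω : Type*} [MeasurableSpace Ω] {μ : Measure Ω} [IsProbabilityMeasure μ]
  {ι : Type*} [Fintype ι] {S : ι → Type*} [∀ i, MeasurableSpace (S i)] {Y : ∀ i, ℕ → Ω → S i}

theorem covariance_comp_array_nonneg (hYm : ∀ i j, Measurable (Y i j))
    (hY : iIndepFun (fun p : (_ : ι) × ℕ => Y p.1 p.2) μ)
    (hYident : ∀ u u' : ι → ℕ,
      IdentDistrib (fun ω i => Y i (u i) ω) (fun ω i => Y i (u' i) ω) μ μ)
    {f : (∀ i, S i) → ℝ} (hf : Measurable f) (v w : ι → ℕ)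
    (hf2 : MemLp (fun ω => f fun i => Y i (v i) ω) 2 μ) :
    0 ≤ cov[fun ω => f fun i => Y i (v i) ω, fun ω => f fun i => Y i (w i) ω; μ] := by
  classical
  -- `w'` agrees with `w` off the coordinates shared with `v`, and uses fresh rows on them
  set w' : ι → ℕ := fun i => if v i = w i then v i + 1 else w i
  set m : (∀ i, S i) × (∀ i, S i) → ∀ i, S i := fun p i => if v i = w i then p.1 i else p.2 i
  have hvw' : ∀ i j, (⟨i, v i⟩ : (_ : ι) × ℕ) ≠ ⟨j, w' j⟩ := by
    rintro _ j h
    obtain ⟨rfl, h⟩ := Sigma.mk.inj_iff.1 h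
    have := eq_of_heq h
    simp only [w'] at this
    split_ifs at this <;> omega
  have hm : Measurable m := by
    refine measurable_pi_lambda _ fun i => ?_
    by_cases h : v i = w i
    · simp only [m, h, if_true]; fun_prop
    · simp only [m, h, if_false]; fun_prop
  have hmix : ∀ ω, m ((fun i => Y i (v i) ω), fun i => Y i (w' i) ω) = fun i => Y i (w i) ω := by
    intro ω; funext i
    by_cases h : v i = w i <;> simp [m, w', h]
  have hmm : ∀ x y z, m (m (x, y), z) = m (x, z) := by
    intro x y z; funext i
    by_cases h : v i = w i <;> simp [m, h]
  have key := covariance_comp_nonneg_of_indepFun (measurable_pi_lambda _ fun i => hYm i (v i))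
    (measurable_pi_lambda _ fun i => hYm i (w' i))
    (hY.indepFun_comp_of_disjoint (fun p => hYm p.1 p.2) hvw') (hYident w' v) hm hmm
    (by simpa only [hmix] using hYident w v) hf hf2
  simpa only [hmix] using key

end Array

section Average

variable {Ω : Type*} [MeasurableSpace Ω] {μ : Measure Ω} [IsFiniteMeasure μ]

lemma two_mul_covariance_le_add_variance {X Y : Ω → ℝ} (hX : MemLp X 2 μ) (hY : MemLp Y 2 μ) :
    2 * cov[X, Y; μ] ≤ Var[X; μ] + Var[Y; μ] := by
  have := variance_nonneg (X - Y) μ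
  rw [variance_sub hX hY] at this
  linarith

variable {ι : Type*} {P : ι → Ω → ℝ} {A : Finset ι} {σ2 : ℝ}

lemma variance_average_eq (hP : ∀ v ∈ A, MemLp (P v) 2 μ) :
    Var[fun ω => (A.card : ℝ)⁻¹ * ∑ v ∈ A, P v ω; μ] =
      (A.card : ℝ)⁻¹ ^ 2 * ∑ v ∈ A, ∑ w ∈ A, cov[P v, P w; μ] := by
  rw [variance_const_mul, variance_fun_sum' hP]

lemma variance_average_le (hA : A.Nonempty) (hP : ∀ v ∈ A, MemLp (P v) 2 μ)
    (hvar : ∀ v ∈ A, Var[P v; μ] = σ2) :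
    Var[fun ω => (A.card : ℝ)⁻¹ * ∑ v ∈ A, P v ω; μ] ≤ σ2 := by
  have hcov : ∀ v ∈ A, ∀ w ∈ A, cov[P v, P w; μ] ≤ σ2 := fun v hv w hw => by
    have := two_mul_covariance_le_add_variance (hP v hv) (hP w hw)
    rw [hvar v hv, hvar w hw] at this
    linarith
  have hc : (A.card : ℝ) ≠ 0 := by exact_mod_cast hA.card_pos.ne'
  calc Var[fun ω => (A.card : ℝ)⁻¹ * ∑ v ∈ A, P v ω; μ]
      ≤ (A.card : ℝ)⁻¹ ^ 2 * ∑ v ∈ A, ∑ w ∈ A, σ2 := by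
        rw [variance_average_eq hP]
        gcongr with v hv w hw
        exact hcov v hv w hw
    _ = σ2 := by simp only [Finset.sum_const, nsmul_eq_mul]; field_simp

lemma inv_card_mul_le_variance_average (hA : A.Nonempty) (hP : ∀ v ∈ A, MemLp (P v) 2 μ)
    (hvar : ∀ v ∈ A, Var[P v; μ] = σ2) (hcov : ∀ v ∈ A, ∀ w ∈ A, 0 ≤ cov[P v, P w; μ]) :
    (A.card : ℝ)⁻¹ * σ2 ≤ Var[fun ω => (A.card : ℝ)⁻¹ * ∑ v ∈ A, P v ω; μ] := by
  have hc : (A.card : ℝ) ≠ 0 := by exact_mod_cast hA.card_pos.ne'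
  have hdiag : ∀ v ∈ A, σ2 ≤ ∑ w ∈ A, cov[P v, P w; μ] := fun v hv => by
    rw [← hvar v hv, ← covariance_self (hP v hv).aemeasurable]
    exact Finset.single_le_sum (fun w hw => hcov v hv w hw) hv
  calc (A.card : ℝ)⁻¹ * σ2 = (A.card : ℝ)⁻¹ ^ 2 * ∑ _v ∈ A, σ2 := by
        simp only [Finset.sum_const, nsmul_eq_mul]; field_simp
    _ ≤ _ := by
        rw [variance_average_eq hP]
        gcongr with v hv
        exact hdiag v hv

end Average

theorem stmt7_general {Ω : Type*} [MeasurableSpace Ω]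
    (μ : Measure Ω) [IsProbabilityMeasure μ]
    (N : ℕ) (S : Fin N → Type*) [∀ i, MeasurableSpace (S i)]
    (X : ∀ i, Ω → S i)
    (hXindep : iIndepFun X μ)
    (Y : ∀ i : Fin N, ℕ → Ω → S i) (hYmeas : ∀ i j, Measurable (Y i j))
    (hYindep : iIndepFun
      (fun p : (i : Fin N) × ℕ => Y p.1 p.2) μ)
    (hYdist : ∀ i j, IdentDistrib (Y i j) (X i) μ μ)
    (f : (∀ i, S i) → ℝ) (hfmeas : Measurable f)
    (hf2 : MemLp (fun ω => f (fun i => X i ω)) 2 μ)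
    (A : Finset (Fin N → ℕ)) (hA : A.Nonempty)
    (Zbar : Ω → ℝ)
    (hZbar : Zbar = fun ω => (A.card : ℝ)⁻¹ * ∑ v ∈ A, f (fun i => Y i (v i) ω)) :
    ((A.card : ℝ)⁻¹ *
        (∫ ω, (f (fun i => X i ω)) ^ 2 ∂μ - (∫ ω, f (fun i => X i ω) ∂μ) ^ 2) ≤
      ∫ ω, Zbar ω ^ 2 ∂μ - (∫ ω, Zbar ω ∂μ) ^ 2) ∧
    (∫ ω, Zbar ω ^ 2 ∂μ - (∫ ω, Zbar ω ∂μ) ^ 2 ≤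
      ∫ ω, (f (fun i => X i ω)) ^ 2 ∂μ - (∫ ω, f (fun i => X i ω) ∂μ) ^ 2) := by
  have hrow : ∀ v : Fin N → ℕ,
      IdentDistrib (fun ω i => Y i (v i) ω) (fun ω i => X i ω) μ μ := fun v =>
    IdentDistrib.pi (fun i => hYdist i (v i))
      (hYindep.precomp (g := fun i => ⟨i, v i⟩) fun _ _ h => congrArg Sigma.fst h) hXindep
  have hP : ∀ v : Fin N → ℕ,
      IdentDistrib (fun ω => f fun i => Y i (v i) ω) (fun ω => f fun i => X i ω) μ μ :=
    fun v => (hrow v).comp hfmeas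
  have hP2 : ∀ v : Fin N → ℕ, MemLp (fun ω => f fun i => Y i (v i) ω) 2 μ :=
    fun v => (hP v).memLp_iff.2 hf2
  have hZ2 : MemLp Zbar 2 μ := hZbar ▸ (memLp_finsetSum A fun v _ => hP2 v).const_mul _
  have hvar : ∀ v ∈ A,
      Var[fun ω => f fun i => Y i (v i) ω; μ] = Var[fun ω => f fun i => X i ω; μ] :=
    fun v _ => (hP v).variance_eq
  have hcov : ∀ v ∈ A, ∀ w ∈ A,
      0 ≤ cov[fun ω => f fun i => Y i (v i) ω, fun ω => f fun i => Y i (w i) ω; μ] :=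
    fun v _ w _ => covariance_comp_array_nonneg hYmeas hYindep
      (fun u u' => (hrow u).trans (hrow u').symm) hfmeas v w (hP2 v)
  have hlow := inv_card_mul_le_variance_average hA (fun v _ => hP2 v) hvar hcov
  have hup := variance_average_le hA (fun v _ => hP2 v) hvar
  rw [← hZbar, variance_eq_sub hZ2, variance_eq_sub hf2] at hlow hup
  exact ⟨hlow, hup⟩

/-- Let `X = (X₁,…,X_N)` have independent coordinates, and `(Y_{i,j})` be a
jointly independent family with `Y_{i,j} ~ X_i`. For measurable `f` with `f(X)`
square-integrable and a finite nonempty `A ⊂ ℕ₊^N`, the average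
`Z̄ = (1/|A|) ∑_{v∈A} f(Y_v)` (with `Y_v = (Y_{1,v₁},…,Y_{N,v_N})`) satisfies
`(1/|A|)·Var(f(X)) ≤ Var(Z̄) ≤ Var(f(X))`, where `Var(W) = E(W²) − (E W)²`. -/
theorem stmt7 {Ω : Type*} [MeasurableSpace Ω]
    (μ : Measure Ω) [IsProbabilityMeasure μ]
    (N : ℕ) (hN : 0 < N) (S : Fin N → Type*) [∀ i, MeasurableSpace (S i)]
    (X : ∀ i, Ω → S i) (hXmeas : ∀ i, Measurable (X i))
    (hXindep : iIndepFun X μ)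
    (Y : ∀ i : Fin N, ℕ → Ω → S i) (hYmeas : ∀ i j, Measurable (Y i j))
    (hYindep : iIndepFun
      (fun p : (i : Fin N) × ℕ => Y p.1 p.2) μ)
    (hYdist : ∀ i j, IdentDistrib (Y i j) (X i) μ μ)
    (f : (∀ i, S i) → ℝ) (hfmeas : Measurable f)
    (hf2 : MemLp (fun ω => f (fun i => X i ω)) 2 μ)
    (A : Finset (Fin N → ℕ)) (hA : A.Nonempty)
    (Zbar : Ω → ℝ)
    (hZbar : Zbar = fun ω => (A.card : ℝ)⁻¹ * ∑ v ∈ A, f (fun i => Y i (v i) ω)) :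
    ((A.card : ℝ)⁻¹ *
        (∫ ω, (f (fun i => X i ω)) ^ 2 ∂μ - (∫ ω, f (fun i => X i ω) ∂μ) ^ 2) ≤
      ∫ ω, Zbar ω ^ 2 ∂μ - (∫ ω, Zbar ω ∂μ) ^ 2) ∧
    (∫ ω, Zbar ω ^ 2 ∂μ - (∫ ω, Zbar ω ∂μ) ^ 2 ≤
      ∫ ω, (f (fun i => X i ω)) ^ 2 ∂μ - (∫ ω, f (fun i => X i ω) ∂μ) ^ 2) :=
  stmt7_general μ N S X hXindep Y hYmeas hYindep hYdist f hfmeas hf2 A hA Zbar hZbar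
end

section
/- Let n ≤ n′ be positive integers, let U be a random variable with values in a measurable space, and let V₁, …, V_{n′} be i.i.d. random variables (with values in a measurable space) that are independent of U. Let φ be a measurable real-valued function of (u, v₁,…,v_n) that is symmetric in its last n arguments, and suppose W = φ(U, V₁,…,V_n) is square-integrable. Define φ′ = (1/C(n′,n)) Σ_L φ(U, V_{l₁},…,V_{l_n}), where the sum is over all n-element subsets L = {l₁ < ⋯ < l_n} of {1,…,n′} and C(n′,n) is the binomial coefficient. Then (1/C(n′,n))·Var(W) ≤ Var(φ′) ≤ Var(W). -/
/-!
Transport everything to the canonical space `α × (Fin n' → β)` carrying the law of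
`(U, V₁, …, V_{n'})`; there the summand `X_L` of `φ'` is `φ (u, v ∘ e_L)` with `e_L` injective,
so it has the law of `W`. Hence `Var φ' = C(n',n)⁻² ∑_{L,L'} Cov(X_L, X_{L'})` with
`Cov(X_L, X_L) = Var W`, and both bounds follow from `0 ≤ Cov(X_L, X_{L'}) ≤ Var W`; the upper
one is `Var(X_L - X_{L'}) ≥ 0`. For the lower one, put `S = L ∩ L'` and resample the
coordinates outside `S` independently: given `(U, V_S)` the two summands are then independent,
and by the symmetry of `φ` they have the same conditional mean `g(U, V_S)`, so
`Cov(X_L, X_{L'}) = Var g ≥ 0`.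
-/

open MeasureTheory ProbabilityTheory Finset

section ProductMeasure

variable {ι κ β : Type*} [Fintype ι] [Fintype κ] [MeasurableSpace β]

theorem measurePreserving_comp_of_injective (ν : Measure β) [IsProbabilityMeasure ν]
    {e : ι → κ} (he : e.Injective) :
    MeasurePreserving (fun (v : κ → β) i => v (e i))
      (Measure.pi fun _ => ν) (Measure.pi fun _ => ν) := by
  refine ⟨by fun_prop, ?_⟩
  have h := ((iIndepFun_pi (μ := fun _ : κ => ν) (X := fun _ => id)
    fun _ => aemeasurable_id).precomp he).map_fun_eq_pi_map
      fun _ => (measurable_pi_apply _).aemeasurable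
  simpa [(measurePreserving_eval (fun _ : κ => ν) _).map_eq] using h

theorem measurePreserving_piecewise [DecidableEq κ] (μ : κ → Measure β)
    [∀ i, IsProbabilityMeasure (μ i)] (S : Finset κ) :
    MeasurePreserving (fun p : (κ → β) × (κ → β) => S.piecewise p.1 p.2)
      ((Measure.pi μ).prod (Measure.pi μ)) (Measure.pi μ) := by
  have h := (measurePreserving_pi (fun i => (μ i).prod (μ i)) μ
    (f := fun i => if i ∈ S then Prod.fst else Prod.snd) fun i => by
      split_ifs
      exacts [measurePreserving_fst, measurePreserving_snd]).comp
    (measurePreserving_arrowProdEquivProdArrow β β κ μ μ).symm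
  convert h using 1
  ext p i
  by_cases hi : i ∈ S <;> simp [hi, MeasurableEquiv.arrowProdEquivProdArrow]

end ProductMeasure

theorem dependsOn_piecewise_comp {ι κ β γ : Type*} [Fintype ι] [DecidableEq κ] (F : (ι → β) → γ)
    (S : Finset κ) (v : κ → β) (e : ι → κ) :
    DependsOn (fun t => F fun i => S.piecewise v t (e i)) ↑(univ.image e \ S) := by
  intro t t' h
  refine congrArg F (funext fun i => ?_)
  by_cases hi : e i ∈ S
  · simp [hi]
  · simpa [hi] using h (e i) (by simp [hi])

theorem indepFun_of_dependsOn_of_disjoint {ι : Type*} [Fintype ι] {X : ι → Type*}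
    [∀ i, MeasurableSpace (X i)] (μ : (i : ι) → Measure (X i))
    [∀ i, IsProbabilityMeasure (μ i)] {γ δ : Type*} [MeasurableSpace γ] [MeasurableSpace δ]
    {F : (Π i, X i) → γ} {G : (Π i, X i) → δ} (hF : Measurable F) (hG : Measurable G)
    {s t : Finset ι} (hst : Disjoint s t) (hFs : DependsOn F s) (hGt : DependsOn G t) :
    IndepFun F G (Measure.pi μ) := by
  classical
  have : ∀ i, Nonempty (X i) := fun i => nonempty_of_isProbabilityMeasure (μ i)
  let extend (s : Finset ι) (x : Π i : s, X i) : Π i, X i :=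
    fun i => if h : i ∈ s then x ⟨i, h⟩ else Classical.arbitrary _
  have hextend (s : Finset ι) : Measurable (extend s) := by
    refine measurable_pi_lambda _ fun i => ?_
    by_cases h : i ∈ s
    · simpa [extend, h] using measurable_pi_apply (⟨i, h⟩ : s)
    · simp [extend, h]
  have hF' : F = (F ∘ extend s) ∘ s.restrict :=
    funext fun x => hFs fun i hi => by simp [extend, mem_coe.1 hi]
  have hG' : G = (G ∘ extend t) ∘ t.restrict :=
    funext fun x => hGt fun i hi => by simp [extend, mem_coe.1 hi]
  rw [hF', hG']
  exact ((iIndepFun_pi (X := fun i => @id (X i)) fun _ => aemeasurable_id).indepFun_finset s t hst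
    fun i => measurable_pi_apply i).comp (hF.comp (hextend s)) (hG.comp (hextend t))

theorem Function.Injective.exists_perm_comp_eq {ι κ : Type*} [Fintype ι] [DecidableEq κ]
    {e₁ e₂ : ι → κ} (he₁ : e₁.Injective) (he₂ : e₂.Injective) :
    ∃ τ : Equiv.Perm ι, ∀ i, e₂ i ∈ Set.range e₁ → e₁ (τ i) = e₂ i := by
  let E₁ : ι ≃ (Set.range e₁).toFinset :=
    (Equiv.ofInjective e₁ he₁).trans (Equiv.subtypeEquivRight fun _ => Set.mem_toFinset.symm)
  obtain ⟨g, hg⟩ := Set.MapsTo.exists_equiv_extend_of_card_eq (s := e₂ ⁻¹' Set.range e₁)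
    (by rw [Fintype.card_congr E₁, Fintype.card_coe]) (fun i hi => by simpa using hi) he₂.injOn
  exact ⟨g.trans E₁.symm, fun i hi =>
    (congrArg Subtype.val (E₁.apply_symm_apply (g i))).trans (hg i hi)⟩

theorem covariance_nonneg_of_fiberwise {X Y : Type*} [MeasurableSpace X] [MeasurableSpace Y]
    {P : Measure X} {π : Measure Y} [IsProbabilityMeasure P] [IsProbabilityMeasure π]
    {f₁ f₂ : X × Y → ℝ} (h₁ : MemLp f₁ 2 (P.prod π)) (h₂ : MemLp f₂ 2 (P.prod π))
    (hmul : ∀ x, ∫ y, f₁ (x, y) * f₂ (x, y) ∂π = (∫ y, f₁ (x, y) ∂π) * ∫ y, f₂ (x, y) ∂π)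
    (heq : ∀ x, ∫ y, f₂ (x, y) ∂π = ∫ y, f₁ (x, y) ∂π) :
    0 ≤ cov[f₁, f₂; P.prod π] := by
  set g : X → ℝ := fun x => ∫ y, f₁ (x, y) ∂π
  have hint₁₂ := h₁.integrable_mul h₂
  have hgg : (fun x => ∫ y, f₁ (x, y) * f₂ (x, y) ∂π) = fun x => g x ^ 2 := by
    ext x; rw [hmul, heq, sq]
  have hg : MemLp g 2 P :=
    (memLp_two_iff_integrable_sq
      (h₁.integrable one_le_two).integral_prod_left.aestronglyMeasurable).2
      (hgg ▸ hint₁₂.integral_prod_left)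
  rw [covariance_eq_sub h₁ h₂, integral_prod _ hint₁₂,
    integral_prod _ (h₁.integrable one_le_two), integral_prod _ (h₂.integrable one_le_two)]
  simp only [Pi.mul_apply, hmul, heq, ← sq]
  exact variance_eq_sub hg ▸ variance_nonneg g P

theorem covariance_le_of_variance_eq {Ω : Type*} [MeasurableSpace Ω] {μ : Measure Ω}
    [IsFiniteMeasure μ] {X Y : Ω → ℝ} (hX : MemLp X 2 μ) (hY : MemLp Y 2 μ) {v : ℝ}
    (hXv : Var[X; μ] = v) (hYv : Var[Y; μ] = v) : cov[X, Y; μ] ≤ v := by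
  have := variance_nonneg (X - Y) μ
  rw [variance_sub hX hY, hXv, hYv] at this
  linarith

theorem variance_average_mem_Icc {Ω ι : Type*} [MeasurableSpace Ω] {μ : Measure Ω}
    [IsFiniteMeasure μ] {X : ι → Ω → ℝ} {s : Finset ι} (hs : s.Nonempty)
    (hX : ∀ i ∈ s, MemLp (X i) 2 μ) {v : ℝ} (hvar : ∀ i ∈ s, Var[X i; μ] = v)
    (hcov : ∀ i ∈ s, ∀ j ∈ s, 0 ≤ cov[X i, X j; μ]) :
    Var[fun ω => (#s : ℝ)⁻¹ * ∑ i ∈ s, X i ω; μ] ∈ Set.Icc ((#s : ℝ)⁻¹ * v) v := by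
  have hN : (0 : ℝ) < #s := by exact_mod_cast hs.card_pos
  have hrow (i) (hi : i ∈ s) : v ≤ ∑ j ∈ s, cov[X i, X j; μ] :=
    calc v = cov[X i, X i; μ] := by rw [covariance_self (hX i hi).aemeasurable, hvar i hi]
      _ ≤ _ := single_le_sum (hcov i hi) hi
  have hlow : #s * v ≤ ∑ i ∈ s, ∑ j ∈ s, cov[X i, X j; μ] := by
    simpa using sum_le_sum hrow
  have hup : ∑ i ∈ s, ∑ j ∈ s, cov[X i, X j; μ] ≤ #s * (#s * v) := by
    simpa using sum_le_sum fun i hi => sum_le_sum fun j hj =>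
      covariance_le_of_variance_eq (hX i hi) (hX j hj) (hvar i hi) (hvar j hj)
  rw [variance_const_mul, variance_fun_sum' hX]
  constructor
  · calc (#s : ℝ)⁻¹ * v = (#s : ℝ)⁻¹ ^ 2 * (#s * v) := by field_simp
      _ ≤ _ := by gcongr
  · calc _ ≤ (#s : ℝ)⁻¹ ^ 2 * (#s * (#s * v)) := by gcongr
      _ = v := by field_simp

section Subsample

variable {α β ι κ : Type*} [MeasurableSpace α] [MeasurableSpace β] [Fintype ι] [Fintype κ]

def subsample (φ : α × (ι → β) → ℝ) (e : ι → κ) (p : α × (κ → β)) : ℝ :=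
  φ (p.1, fun i => p.2 (e i))

variable (μ : Measure α) [IsProbabilityMeasure μ] (ν : Measure β) [IsProbabilityMeasure ν]

theorem measurePreserving_prodMap_comp_of_injective {e : ι → κ} (he : e.Injective) :
    MeasurePreserving (fun p : α × (κ → β) => (p.1, fun i => p.2 (e i)))
      (μ.prod (Measure.pi fun _ => ν)) (μ.prod (Measure.pi fun _ => ν)) :=
  (MeasurePreserving.id μ).prod (measurePreserving_comp_of_injective ν he)

theorem memLp_subsample {φ : α × (ι → β) → ℝ}
    (hφ2 : MemLp φ 2 (μ.prod (Measure.pi fun _ => ν))) {e : ι → κ} (he : e.Injective) :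
    MemLp (subsample φ e) 2 (μ.prod (Measure.pi fun _ => ν)) :=
  hφ2.comp_measurePreserving (measurePreserving_prodMap_comp_of_injective μ ν he)

theorem variance_subsample {φ : α × (ι → β) → ℝ} (hφ : Measurable φ) {e : ι → κ}
    (he : e.Injective) :
    Var[subsample φ e; μ.prod (Measure.pi fun _ => ν)] =
      Var[φ; μ.prod (Measure.pi fun _ => ν)] :=
  (measurePreserving_prodMap_comp_of_injective μ ν he).variance_fun_comp hφ.aemeasurable

theorem integral_piecewise_comp_eq [DecidableEq κ] (S : Finset κ) (v : κ → β)
    {F : (ι → β) → ℝ} (hF : Measurable F) {e e' : ι → κ} (he : e.Injective)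
    (he' : e'.Injective) (hee' : ∀ i, e i ∈ S ∨ e' i ∈ S → e i = e' i) :
    ∫ t, F (fun i => S.piecewise v t (e i)) ∂(Measure.pi fun _ => ν) =
      ∫ t, F (fun i => S.piecewise v t (e' i)) ∂(Measure.pi fun _ => ν) := by
  have reduce {e : ι → κ} (he : e.Injective) :
      ∫ t, F (fun i => S.piecewise v t (e i)) ∂(Measure.pi fun _ => ν) =
        ∫ s, F (fun i => if e i ∈ S then v (e i) else s i) ∂(Measure.pi fun _ => ν) := by
    have hR : Measurable fun (s : ι → β) i => if e i ∈ S then v (e i) else s i :=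
      measurable_pi_lambda _ fun i => by split_ifs <;> fun_prop
    have hmp := measurePreserving_comp_of_injective ν he
    rw [← hmp.map_eq]
    exact (integral_map hmp.aemeasurable (hF.comp hR).aestronglyMeasurable).symm
  rw [reduce he, reduce he']
  congr! 4 with s i
  by_cases h : e i ∈ S ∨ e' i ∈ S
  · rw [hee' i h]
  · simp_all

variable {μ ν} {φ : α × (ι → β) → ℝ}

theorem integral_piecewise_inter_comp_eq [DecidableEq κ] (hφ : Measurable φ)
    (hsym : ∀ (σ : Equiv.Perm ι) (u : α) (v : ι → β), φ (u, v ∘ σ) = φ (u, v))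
    {e₁ e₂ : ι → κ} (he₁ : e₁.Injective) (he₂ : e₂.Injective) (u : α) (v : κ → β) :
    ∫ t, φ (u, fun i => (univ.image e₁ ∩ univ.image e₂).piecewise v t (e₂ i))
        ∂(Measure.pi fun _ => ν) =
      ∫ t, φ (u, fun i => (univ.image e₁ ∩ univ.image e₂).piecewise v t (e₁ i))
        ∂(Measure.pi fun _ => ν) := by
  set S := univ.image e₁ ∩ univ.image e₂
  -- relabel `e₁` by `τ` so that it agrees with `e₂` on the shared coordinates `S`
  obtain ⟨τ, hτ⟩ := he₁.exists_perm_comp_eq he₂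
  have hS {j} (hj : j ∈ S) : j ∈ Set.range e₁ ∧ j ∈ Set.range e₂ := by simpa [S] using hj
  calc _ = ∫ t, φ (u, fun i => S.piecewise v t (e₁ (τ i))) ∂(Measure.pi fun _ => ν) := by
        refine integral_piecewise_comp_eq ν S v (hφ.comp measurable_prodMk_left) he₂
          (he₁.comp τ.injective) fun i hi => ?_
        rcases hi with hi | hi
        · exact (hτ i (hS hi).1).symm
        · obtain ⟨j, hj⟩ := (hS hi).2
          obtain rfl : j = i := τ.injective (he₁ (hτ j ⟨τ i, hj.symm⟩ ▸ hj))
          exact hj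
    _ = _ := integral_congr_ae (ae_of_all _ fun t => hsym τ u fun i => S.piecewise v t (e₁ i))

theorem covariance_subsample_nonneg (hφ : Measurable φ)
    (hsym : ∀ (σ : Equiv.Perm ι) (u : α) (v : ι → β), φ (u, v ∘ σ) = φ (u, v))
    (hφ2 : MemLp φ 2 (μ.prod (Measure.pi fun _ => ν)))
    {e₁ e₂ : ι → κ} (he₁ : e₁.Injective) (he₂ : e₂.Injective) :
    0 ≤ cov[subsample φ e₁, subsample φ e₂; μ.prod (Measure.pi fun _ => ν)] := by
  classical
  set π := Measure.pi fun _ : κ => ν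
  set S := univ.image e₁ ∩ univ.image e₂
  have hΘ : MeasurePreserving (fun q : (α × (κ → β)) × (κ → β) => (q.1.1, S.piecewise q.1.2 q.2))
      ((μ.prod π).prod π) (μ.prod π) :=
    ((MeasurePreserving.id μ).prod (measurePreserving_piecewise _ S)).comp
      (measurePreserving_prodAssoc μ π π)
  have hL2 {e : ι → κ} (he : e.Injective) : MemLp (subsample φ e) 2 (μ.prod π) :=
    memLp_subsample μ ν hφ2 he
  rw [← hΘ.map_eq, covariance_map (by rw [hΘ.map_eq]; exact (hL2 he₁).aestronglyMeasurable)
    (by rw [hΘ.map_eq]; exact (hL2 he₂).aestronglyMeasurable) hΘ.aemeasurable]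
  refine covariance_nonneg_of_fiberwise ((hL2 he₁).comp_measurePreserving hΘ)
    ((hL2 he₂).comp_measurePreserving hΘ) (fun p => ?_)
    (fun p => integral_piecewise_inter_comp_eq hφ hsym he₁ he₂ p.1 p.2)
  have hmeas (e : ι → κ) : Measurable fun t => φ (p.1, fun i => S.piecewise p.2 t (e i)) :=
    hφ.comp (measurable_prodMk_left.comp (measurable_pi_lambda _ fun i => by
      simp only [Finset.piecewise]; split_ifs <;> fun_prop))
  refine IndepFun.integral_fun_mul_eq_mul_integral ?_ (hmeas e₁).aestronglyMeasurable
    (hmeas e₂).aestronglyMeasurable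
  refine indepFun_of_dependsOn_of_disjoint (fun _ => ν) (hmeas e₁) (hmeas e₂) ?_
    (dependsOn_piecewise_comp (fun w => φ (p.1, w)) S p.2 e₁)
    (dependsOn_piecewise_comp (fun w => φ (p.1, w)) S p.2 e₂)
  refine disjoint_left.2 fun j hj₁ hj₂ => ?_
  simp only [mem_sdiff] at hj₁ hj₂
  exact hj₁.2 (mem_inter.2 ⟨hj₁.1, hj₂.1⟩)

theorem variance_average_subsample_mem_Icc (hφ : Measurable φ)
    (hsym : ∀ (σ : Equiv.Perm ι) (u : α) (v : ι → β), φ (u, v ∘ σ) = φ (u, v))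
    (hφ2 : MemLp φ 2 (μ.prod (Measure.pi fun _ => ν))) {Λ : Type*} {s : Finset Λ}
    (hs : s.Nonempty) {e : Λ → ι → κ} (he : ∀ L, (e L).Injective) :
    Var[fun p => (#s : ℝ)⁻¹ * ∑ L ∈ s, subsample φ (e L) p; μ.prod (Measure.pi fun _ => ν)] ∈
      Set.Icc ((#s : ℝ)⁻¹ * Var[φ; μ.prod (Measure.pi fun _ => ν)])
        Var[φ; μ.prod (Measure.pi fun _ => ν)] :=
  variance_average_mem_Icc hs (fun L _ => memLp_subsample μ ν hφ2 (he L))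
    (fun L _ => variance_subsample μ ν hφ (he L))
    (fun L _ L' _ => covariance_subsample_nonneg hφ hsym hφ2 (he L) (he L'))

end Subsample

theorem MeasureTheory.MeasurePreserving.memLp_comp_iff {X Y E : Type*} [MeasurableSpace X]
    [MeasurableSpace Y] [NormedAddCommGroup E] {μ : Measure X} {ν : Measure Y} {f : X → Y}
    (hf : MeasurePreserving f μ ν) {g : Y → E} (hg : AEStronglyMeasurable g ν)
    {p : ENNReal} : MemLp (g ∘ f) p μ ↔ MemLp g p ν := by
  rw [← hf.map_eq] at hg ⊢
  exact (memLp_map_measure_iff hg hf.aemeasurable).symm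

theorem map_prodMk_eq_prod_pi {Ω α β ι : Type*} [MeasurableSpace Ω] [MeasurableSpace α]
    [MeasurableSpace β] [Fintype ι] {μ : Measure Ω} [IsProbabilityMeasure μ] {U : Ω → α}
    {V : ι → Ω → β} (hU : AEMeasurable U μ) (hV : ∀ i, AEMeasurable (V i) μ)
    (hViid : iIndepFun V μ) {ν : Measure β} (hVν : ∀ i, μ.map (V i) = ν)
    (hUV : IndepFun U (fun ω i => V i ω) μ) :
    μ.map (fun ω => (U ω, fun i => V i ω)) = (μ.map U).prod (Measure.pi fun _ => ν) := by
  rw [(indepFun_iff_map_prod_eq_prod_map_map hU (aemeasurable_pi_lambda _ hV)).1 hUV,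
    hViid.map_fun_eq_pi_map hV]
  simp_rw [hVν]

/-- Symmetrisation from `n` to `n′` dimensions: for `U` and i.i.d. `V₁,…,V_{n′}`
independent of `U`, and `φ` symmetric in its last `n` arguments with
`W = φ(U, V₁,…,V_n)` square-integrable, the symmetrised statistic
`φ′ = (1/C(n′,n)) ∑_{L} φ(U, V_{l₁},…,V_{l_n})` (sum over `n`-element subsets
`L = {l₁<⋯<l_n}` of `{1,…,n′}`) satisfies
`(1/C(n′,n))·Var(W) ≤ Var(φ′) ≤ Var(W)`, where `Var(W) = E(W²) − (E W)²`. -/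
theorem stmt8 {Ω α β : Type*} [MeasurableSpace Ω] [MeasurableSpace α] [MeasurableSpace β]
    (μ : Measure Ω) [IsProbabilityMeasure μ]
    (n n' : ℕ) (hn : 0 < n) (hnn' : n ≤ n')
    (U : Ω → α) (hU : Measurable U)
    (V : Fin n' → Ω → β) (hV : ∀ i, Measurable (V i))
    (hViid : iIndepFun V μ)
    (hVid : ∀ i j, IdentDistrib (V i) (V j) μ μ)
    (hUV : IndepFun U (fun ω i => V i ω) μ)
    (φ : α × (Fin n → β) → ℝ) (hφ : Measurable φ)
    (hsym : ∀ (σ : Equiv.Perm (Fin n)) (u : α) (v : Fin n → β), φ (u, v ∘ σ) = φ (u, v))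
    (W : Ω → ℝ) (hW : W = fun ω => φ (U ω, fun i => V (Fin.castLE hnn' i) ω))
    (hW2 : MemLp W 2 μ)
    (φ' : Ω → ℝ)
    (hφ' : φ' = fun ω => (n'.choose n : ℝ)⁻¹ *
      ∑ L ∈ (Finset.powersetCard n (Finset.univ : Finset (Fin n'))).attach,
        φ (U ω, fun i => V (L.1.orderEmbOfFin (Finset.mem_powersetCard.1 L.2).2 i) ω)) :
    ((n'.choose n : ℝ)⁻¹ * (∫ ω, W ω ^ 2 ∂μ - (∫ ω, W ω ∂μ) ^ 2) ≤
      ∫ ω, φ' ω ^ 2 ∂μ - (∫ ω, φ' ω ∂μ) ^ 2) ∧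
    (∫ ω, φ' ω ^ 2 ∂μ - (∫ ω, φ' ω ∂μ) ^ 2 ≤
      ∫ ω, W ω ^ 2 ∂μ - (∫ ω, W ω ∂μ) ^ 2) := by
  have hn' : 0 < n' := hn.trans_le hnn'
  set ν := μ.map (V ⟨0, hn'⟩)
  have : IsProbabilityMeasure ν := Measure.isProbabilityMeasure_map (hV _).aemeasurable
  have : IsProbabilityMeasure (μ.map U) := Measure.isProbabilityMeasure_map hU.aemeasurable
  have hT : MeasurePreserving (fun ω => (U ω, fun i => V i ω)) μ
      ((μ.map U).prod (Measure.pi fun _ => ν)) :=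
    ⟨hU.prodMk (measurable_pi_lambda _ hV), map_prodMk_eq_prod_pi hU.aemeasurable
      (fun i => (hV i).aemeasurable) hViid (fun i => (hVid i _).map_eq) hUV⟩
  have hT₀ := (measurePreserving_prodMap_comp_of_injective (μ.map U) ν
    (Fin.castLE_injective hnn')).comp hT
  have hφ2 : MemLp φ 2 ((μ.map U).prod (Measure.pi fun _ => ν)) :=
    (hT₀.memLp_comp_iff hφ.aestronglyMeasurable).1 (by subst hW; exact hW2)
  have he (L : powersetCard n (univ : Finset (Fin n'))) :=
    (L.1.orderEmbOfFin (mem_powersetCard.1 L.2).2).injective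
  have hbounds := variance_average_subsample_mem_Icc hφ hsym hφ2
    (s := (powersetCard n univ).attach) (by simp [hnn']) he
  rw [card_attach, card_powersetCard, card_univ, Fintype.card_fin] at hbounds
  have hΦ2 := (memLp_finsetSum (powersetCard n univ).attach fun L _ =>
    memLp_subsample _ ν hφ2 (he L)).const_mul ((n'.choose n : ℝ)⁻¹)
  have hVar {Y : Ω → ℝ} (hY : MemLp Y 2 μ) : ∫ ω, Y ω ^ 2 ∂μ - (∫ ω, Y ω ∂μ) ^ 2 = Var[Y; μ] :=
    (variance_eq_sub hY).symm
  rw [← hT.variance_fun_comp hΦ2.aemeasurable, ← hT₀.variance_fun_comp hφ.aemeasurable] at hbounds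
  rw [hVar hW2, hVar (hφ' ▸ hΦ2.comp_measurePreserving hT), hW, hφ']
  exact hbounds
end

section
/- Let N ≥ 2 be an integer and let X be a real random variable with E(X⁴) < ∞, E(X) = 0 and E(X²) > 0. Let Y₁, …, Y_N be i.i.d. random variables each distributed as X, and set M₁ = (1/N) Σ_{i=1}^{N} Y_i and M₂ = (1/N) Σ_{i=1}^{N} Y_i². Then E(M₂²) < (N/(N−1))² · E( (M₂ − M₁²)² ). -/
/-! Write `S = ∑ Yᵢ`, `Q = ∑ Yᵢ²` and `U = ∑_{i ≠ j} Yᵢ Yⱼ`, so that `S² = Q + U` and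
`N/(N-1) · (M₂ - M₁²) = Q/N - U/(N(N-1))`. For independent centred `Yᵢ`, a product
`Y_a Y_b Y_c Y_d` in which some index occurs exactly once has expectation zero. Hence
`E(QU) = 0` and `E(U²) = 2 ∑_{i ≠ j} E(Yᵢ²) E(Yⱼ²) > 0`, so expanding the square gives
`E((Q/N - U/(N(N-1)))²) = E(M₂²) + E(U²)/(N(N-1))² > E(M₂²)`. -/

open MeasureTheory ProbabilityTheory Finset

lemma sq_sum_eq_sum_sq_add_sum_offDiag {κ R : Type*} [DecidableEq κ] [CommSemiring R]
    (s : Finset κ) (f : κ → R) :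
    (∑ i ∈ s, f i) ^ 2 = ∑ i ∈ s, f i ^ 2 + ∑ p ∈ s.offDiag, f p.1 * f p.2 := by
  rw [sq, sum_mul_sum, ← sum_product' (f := fun i j => f i * f j), ← diag_union_offDiag,
    sum_union (disjoint_diag_offDiag _), sum_diag]
  simp only [sq]

lemma div_sub_one_mul_sub_sq_eq {n q s u : ℝ} (hn : n ≠ 0) (hn1 : n - 1 ≠ 0)
    (hs : s ^ 2 = q + u) :
    n / (n - 1) * (n⁻¹ * q - (n⁻¹ * s) ^ 2) = n⁻¹ * q - (n * (n - 1))⁻¹ * u := by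
  rw [mul_pow, hs]
  field_simp
  ring

namespace MeasureTheory

variable {α : Type*} [MeasurableSpace α] {μ : Measure α} {f g : α → ℝ}

lemma MemLp.mul_of_four (hf : MemLp f 4 μ) (hg : MemLp g 4 μ) : MemLp (f * g) 2 μ :=
  haveI : ENNReal.HolderTriple 4 4 2 := ⟨by
    rw [← two_mul, show (4 : ENNReal) = 2 * 2 by norm_num, ENNReal.mul_inv (by simp) (by simp),
      ← mul_assoc, ENNReal.mul_inv_cancel (by simp) (by simp), one_mul]⟩
  hg.mul hf

lemma integral_sub_sq_of_integral_mul_eq_zero (hf : MemLp f 2 μ) (hg : MemLp g 2 μ)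
    (hfg : ∫ x, f x * g x ∂μ = 0) :
    ∫ x, (f x - g x) ^ 2 ∂μ = ∫ x, f x ^ 2 ∂μ + ∫ x, g x ^ 2 ∂μ := by
  have hsq : Integrable (fun x => f x ^ 2 + g x ^ 2) μ := hf.integrable_sq.add hg.integrable_sq
  have hfg' : Integrable (fun x => 2 * (f x * g x)) μ := (hf.integrable_mul hg).const_mul 2
  calc ∫ x, (f x - g x) ^ 2 ∂μ = ∫ x, (f x ^ 2 + g x ^ 2 - 2 * (f x * g x)) ∂μ := by
        congr with x; ring
    _ = _ := by
        rw [integral_sub hsq hfg', integral_add hf.integrable_sq hg.integrable_sq,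
          integral_const_mul, hfg, mul_zero, sub_zero]

lemma integral_sum_mul_sum {κ κ' : Type*} {s : Finset κ} {t : Finset κ'} {F : κ → α → ℝ}
    {G : κ' → α → ℝ} (h : ∀ i ∈ s, ∀ j ∈ t, Integrable (fun x => F i x * G j x) μ) :
    ∫ x, (∑ i ∈ s, F i x) * ∑ j ∈ t, G j x ∂μ = ∑ i ∈ s, ∑ j ∈ t, ∫ x, F i x * G j x ∂μ := by
  simp_rw [sum_mul_sum]
  rw [integral_finsetSum _ fun i hi => integrable_finsetSum _ (h i hi)]
  exact sum_congr rfl fun i hi => integral_finsetSum _ (h i hi)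

end MeasureTheory

namespace ProbabilityTheory

variable {Ω ι : Type*} {Y : ι → Ω → ℝ}

def crossSum [Fintype ι] [DecidableEq ι] (Y : ι → Ω → ℝ) (ω : Ω) : ℝ :=
  ∑ p ∈ (univ : Finset ι).offDiag, Y p.1 ω * Y p.2 ω

lemma sq_sum_eq_sum_sq_add_crossSum [Fintype ι] [DecidableEq ι] (Y : ι → Ω → ℝ) (ω : Ω) :
    (∑ i, Y i ω) ^ 2 = ∑ i, Y i ω ^ 2 + crossSum Y ω :=
  sq_sum_eq_sum_sq_add_sum_offDiag _ _

variable [MeasurableSpace Ω] {μ : Measure Ω}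

lemma iIndepFun.integral_mul_mul_mul_eq_zero [DecidableEq ι] (hind : iIndepFun Y μ)
    (hY : ∀ i, AEStronglyMeasurable (Y i) μ) {a b c l : ι} (hl : ∫ ω, Y l ω ∂μ = 0)
    (hal : a ≠ l) (hbl : b ≠ l) (hcl : c ≠ l) :
    ∫ ω, Y a ω * Y b ω * Y c ω * Y l ω ∂μ = 0 := by
  have hST : Disjoint ({a, b, c} : Finset ι) {l} := by simp [hal.symm, hbl.symm, hcl.symm]
  have hindep := (hind.indepFun_finset₀ _ _ hST fun i => (hY i).aemeasurable).comp
    (φ := fun v : ({a, b, c} : Finset ι) → ℝ => v ⟨a, by simp⟩ * v ⟨b, by simp⟩ * v ⟨c, by simp⟩)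
    (ψ := fun v : ({l} : Finset ι) → ℝ => v ⟨l, by simp⟩) (by fun_prop)
    (measurable_pi_apply _ : Measurable fun v : ({l} : Finset ι) → ℝ => v ⟨l, by simp⟩)
  have := hindep.integral_mul_eq_mul_integral (((hY a).mul (hY b)).mul (hY c)) (hY l)
  simpa [hl] using this

lemma iIndepFun.integral_mul_mul_eq_zero [DecidableEq ι] (hind : iIndepFun Y μ)
    (hY : ∀ i, AEStronglyMeasurable (Y i) μ) (hmean : ∀ i, ∫ ω, Y i ω ∂μ = 0) {a b c d : ι}
    (hcd : c ≠ d) (h : c ≠ a ∧ c ≠ b ∨ d ≠ a ∧ d ≠ b) :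
    ∫ ω, Y a ω * Y b ω * (Y c ω * Y d ω) ∂μ = 0 := by
  rcases h with ⟨hca, hcb⟩ | ⟨hda, hdb⟩
  · simp_rw [mul_comm (Y c _), ← mul_assoc]
    exact hind.integral_mul_mul_mul_eq_zero hY (hmean c) hca.symm hcb.symm hcd.symm
  · simp_rw [← mul_assoc]
    exact hind.integral_mul_mul_mul_eq_zero hY (hmean d) hda.symm hdb.symm hcd

lemma iIndepFun.integral_mul_mul_self_of_ne (hind : iIndepFun Y μ)
    (hY : ∀ i, AEStronglyMeasurable (Y i) μ) {i j : ι} (hij : i ≠ j) :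
    ∫ ω, Y i ω * Y j ω * (Y i ω * Y j ω) ∂μ = (∫ ω, Y i ω ^ 2 ∂μ) * ∫ ω, Y j ω ^ 2 ∂μ := by
  have hindep := (hind.indepFun hij).comp (φ := fun x : ℝ => x ^ 2) (ψ := fun x : ℝ => x ^ 2)
    (by fun_prop) (by fun_prop)
  have := hindep.integral_mul_eq_mul_integral ((hY i).pow 2) ((hY j).pow 2)
  simp only [Pi.mul_apply, Function.comp_apply] at this
  rw [← this]
  congr with ω
  ring

section FourthMoments

variable (hY : ∀ i, MemLp (Y i) 4 μ)
include hY

lemma integrable_mul_mul_mul (a b c d : ι) :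
    Integrable (fun ω => Y a ω * Y b ω * (Y c ω * Y d ω)) μ :=
  ((hY a).mul_of_four (hY b)).integrable_mul ((hY c).mul_of_four (hY d))

lemma memLp_sum_sq [Fintype ι] : MemLp (fun ω => ∑ i, Y i ω ^ 2) 2 μ := by
  simp_rw [sq]
  exact memLp_finsetSum _ fun i _ => (hY i).mul_of_four (hY i)

variable [Fintype ι] [DecidableEq ι]

lemma memLp_crossSum : MemLp (crossSum Y) 2 μ :=
  memLp_finsetSum _ fun (p : ι × ι) _ => (hY p.1).mul_of_four (hY p.2)

variable (hind : iIndepFun Y μ) (hmean : ∀ i, ∫ ω, Y i ω ∂μ = 0)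
include hind hmean

lemma integral_sum_sq_mul_crossSum : ∫ ω, (∑ i, Y i ω ^ 2) * crossSum Y ω ∂μ = 0 := by
  simp_rw [sq, crossSum]
  rw [integral_sum_mul_sum fun i _ p _ => integrable_mul_mul_mul hY i i p.1 p.2]
  refine sum_eq_zero fun i _ => sum_eq_zero fun p hp => ?_
  exact hind.integral_mul_mul_eq_zero (fun i => (hY i).1) hmean (mem_offDiag.mp hp).2.2
    (by grind)

lemma integral_crossSum_sq : ∫ ω, crossSum Y ω ^ 2 ∂μ =
    2 * ∑ p ∈ (univ : Finset ι).offDiag, (∫ ω, Y p.1 ω ^ 2 ∂μ) * ∫ ω, Y p.2 ω ^ 2 ∂μ := by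
  have hY' : ∀ i, AEStronglyMeasurable (Y i) μ := fun i => (hY i).1
  simp_rw [sq (crossSum Y _), crossSum]
  rw [integral_sum_mul_sum fun p _ q _ => integrable_mul_mul_mul hY p.1 p.2 q.1 q.2, mul_sum]
  refine sum_congr rfl fun p hp => ?_
  have hp' : p.1 ≠ p.2 := (mem_offDiag.mp hp).2.2
  have hswap : p.swap ∈ (univ : Finset ι).offDiag := by simp [hp'.symm]
  -- by `integral_mul_mul_eq_zero`, only `q = p` and `q = p.swap` contribute
  rw [sum_eq_add_of_mem p p.swap hp hswap (by grind) fun q hq hqp =>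
    hind.integral_mul_mul_eq_zero hY' hmean (mem_offDiag.mp hq).2.2 (by grind)]
  simp only [Prod.fst_swap, Prod.snd_swap, mul_comm (Y p.2 _) (Y p.1 _)]
  rw [hind.integral_mul_mul_self_of_ne hY' hp']
  ring

lemma integral_crossSum_sq_pos [Nontrivial ι] (hvar : ∀ i, 0 < ∫ ω, Y i ω ^ 2 ∂μ) :
    0 < ∫ ω, crossSum Y ω ^ 2 ∂μ := by
  rw [integral_crossSum_sq hY hind hmean]
  obtain ⟨i, j, hij⟩ := exists_pair_ne ι
  have hne : (univ : Finset ι).offDiag.Nonempty := ⟨(i, j), by simp [hij]⟩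
  exact mul_pos two_pos (sum_pos (fun p _ => mul_pos (hvar p.1) (hvar p.2)) hne)

end FourthMoments

end ProbabilityTheory

theorem stmt9_general {Ω : Type*} [MeasurableSpace Ω]
    (μ : Measure Ω)
    (N : ℕ) (hN : 2 ≤ N)
    (X : Ω → ℝ) (hX4 : MemLp X 4 μ)
    (hXmean : ∫ ω, X ω ∂μ = 0) (hXsq : 0 < ∫ ω, (X ω) ^ 2 ∂μ)
    (Y : Fin N → Ω → ℝ)
    (hYindep : iIndepFun Y μ)
    (hYdist : ∀ i, IdentDistrib (Y i) X μ μ) :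
    ∫ ω, ((N : ℝ)⁻¹ * ∑ i, (Y i ω) ^ 2) ^ 2 ∂μ <
      ((N : ℝ) / ((N : ℝ) - 1)) ^ 2 *
        ∫ ω, ((N : ℝ)⁻¹ * ∑ i, (Y i ω) ^ 2 -
          ((N : ℝ)⁻¹ * ∑ i, Y i ω) ^ 2) ^ 2 ∂μ := by
  have hN1 : (1 : ℝ) < N := by exact_mod_cast hN
  have : Nontrivial (Fin N) := Fin.nontrivial_iff_two_le.mpr hN
  have hY4 i : MemLp (Y i) 4 μ := (hYdist i).symm.memLp_snd hX4
  have hmean i : ∫ ω, Y i ω ∂μ = 0 := by rw [(hYdist i).integral_eq, hXmean]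
  have hvar i : 0 < ∫ ω, Y i ω ^ 2 ∂μ :=
    hXsq.trans_eq ((hYdist i).comp (measurable_id.pow_const 2)).integral_eq.symm
  have hrescale ω : ((N : ℝ) / (N - 1)) ^ 2 *
      ((N : ℝ)⁻¹ * ∑ i, Y i ω ^ 2 - ((N : ℝ)⁻¹ * ∑ i, Y i ω) ^ 2) ^ 2 =
      ((N : ℝ)⁻¹ * ∑ i, Y i ω ^ 2 - ((N : ℝ) * (N - 1))⁻¹ * crossSum Y ω) ^ 2 := by
    rw [← mul_pow, div_sub_one_mul_sub_sq_eq (by positivity) (by linarith)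
      (sq_sum_eq_sum_sq_add_crossSum Y ω)]
  rw [← integral_const_mul, integral_congr_ae (ae_of_all _ hrescale),
    integral_sub_sq_of_integral_mul_eq_zero ((memLp_sum_sq hY4).const_mul _)
      ((memLp_crossSum hY4).const_mul _)]
  · refine lt_add_of_pos_right _ ?_
    simp_rw [mul_pow]
    rw [integral_const_mul]
    have := integral_crossSum_sq_pos hY4 hYindep hmean hvar
    positivity
  · simp_rw [mul_mul_mul_comm]
    rw [integral_const_mul, integral_sum_sq_mul_crossSum hY4 hYindep hmean, mul_zero]

/-- For `N ≥ 2`, `X` with `E(X⁴) < ∞`, `E X = 0`, `E(X²) > 0`, and i.i.d.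
`Y₁,…,Y_N` distributed as `X`, setting `M₁ = (1/N)∑ Yᵢ` and `M₂ = (1/N)∑ Yᵢ²`,
it holds that `E(M₂²) < (N/(N−1))² · E((M₂ − M₁²)²)`. -/
theorem stmt9 {Ω : Type*} [MeasurableSpace Ω]
    (μ : Measure Ω) [IsProbabilityMeasure μ]
    (N : ℕ) (hN : 2 ≤ N)
    (X : Ω → ℝ) (hX : Measurable X) (hX4 : MemLp X 4 μ)
    (hXmean : ∫ ω, X ω ∂μ = 0) (hXsq : 0 < ∫ ω, (X ω) ^ 2 ∂μ)
    (Y : Fin N → Ω → ℝ) (hY : ∀ i, Measurable (Y i))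
    (hYindep : iIndepFun Y μ)
    (hYdist : ∀ i, IdentDistrib (Y i) X μ μ) :
    ∫ ω, ((N : ℝ)⁻¹ * ∑ i, (Y i ω) ^ 2) ^ 2 ∂μ <
      ((N : ℝ) / ((N : ℝ) - 1)) ^ 2 *
        ∫ ω, ((N : ℝ)⁻¹ * ∑ i, (Y i ω) ^ 2 -
          ((N : ℝ)⁻¹ * ∑ i, Y i ω) ^ 2) ^ 2 ∂μ :=
  stmt9_general μ N hN X hX4 hXmean hXsq Y hYindep hYdist
end

section
/- Let N ≥ 2 be an integer. Let U₁, …, U_N be i.i.d. real random variables with E(U₁⁴) < ∞, and let W₁, …, W_N be i.i.d. square-integrable real random variables such that the vector (U₁,…,U_N) is independent of the vector (W₁,…,W_N). Set Ū = (1/N)Σ_i U_i, W̄ = (1/N)Σ_i W_i, B_i = U_i − Ū and C_i = W_i − W̄, and define T = (1/(N−1)) Σ_{i=1}^{N} (B_i + C_i)·B_i. Then E(T²) ≥ (1/(N−1)) · Var(U₁) · Var(W₁). -/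
open MeasureTheory ProbabilityTheory Matrix

/-! Write `P = I - J/N` for the centering matrix, `Bᵢ = (P U)ᵢ`, `Cᵢ = (P W)ᵢ`, `S = ∑ᵢ Bᵢ²` and
`X = ∑ᵢ Bᵢ Cᵢ`, so that `(N - 1) T = S + X`. The `Cᵢ` have mean zero and are independent of the
`U`-vector, so `E[S X] = 0` and `(N - 1)² E[T²] = E[S²] + E[X²] ≥ E[X²]`. By independence
`E[X²] = ∑ᵢⱼ E[Bᵢ Bⱼ] E[Cᵢ Cⱼ]`, and for i.i.d. coordinates `E[Bᵢ Bⱼ] = Var(U₁) Pᵢⱼ`. Since `P` is a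
symmetric idempotent of trace `N - 1`, `∑ᵢⱼ Pᵢⱼ² = N - 1`, whence `E[X²] = (N - 1) Var(U₁) Var(W₁)`. -/

noncomputable def centeringMatrix (ι : Type*) [Fintype ι] [DecidableEq ι] : Matrix ι ι ℝ :=
  1 - (Fintype.card ι : ℝ)⁻¹ • Matrix.of fun _ _ => 1

section CenteringMatrix

variable {ι : Type*} [Fintype ι] [DecidableEq ι]

lemma centeringMatrix_apply (i j : ι) :
    centeringMatrix ι i j = (if i = j then 1 else 0) - (Fintype.card ι : ℝ)⁻¹ := by
  simp [centeringMatrix, Matrix.one_apply]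

lemma centeringMatrix_mulVec_apply (x : ι → ℝ) (i : ι) :
    (centeringMatrix ι *ᵥ x) i = x i - (Fintype.card ι : ℝ)⁻¹ * ∑ j, x j := by
  simp [Matrix.mulVec, dotProduct, centeringMatrix_apply, sub_mul, Finset.sum_sub_distrib,
    Finset.mul_sum]

lemma sum_centeringMatrix_apply [Nonempty ι] (i : ι) : ∑ j, centeringMatrix ι i j = 0 := by
  simp [centeringMatrix_apply, Finset.sum_sub_distrib]

lemma centeringMatrix_transpose : (centeringMatrix ι)ᵀ = centeringMatrix ι := by
  ext i j
  simp [centeringMatrix_apply, eq_comm]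

lemma centeringMatrix_mul_self [Nonempty ι] :
    centeringMatrix ι * centeringMatrix ι = centeringMatrix ι := by
  ext i j
  simp [Matrix.mul_apply, centeringMatrix_apply, sub_mul, mul_sub, Finset.sum_sub_distrib]

lemma trace_centeringMatrix [Nonempty ι] : (centeringMatrix ι).trace = Fintype.card ι - 1 := by
  simp [Matrix.trace, centeringMatrix_apply, Finset.sum_sub_distrib]

lemma sum_sum_centeringMatrix_apply_sq [Nonempty ι] :
    ∑ i, ∑ j, centeringMatrix ι i j ^ 2 = Fintype.card ι - 1 := calc
  _ = (centeringMatrix ι * (centeringMatrix ι)ᵀ).trace := by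
    simp [Matrix.trace, Matrix.mul_apply, sq]
  _ = Fintype.card ι - 1 := by
    rw [centeringMatrix_transpose, centeringMatrix_mul_self, trace_centeringMatrix]

end CenteringMatrix

section SecondMoments

variable {Ω ι : Type*} [MeasurableSpace Ω] {μ : Measure Ω}

lemma MeasureTheory.MemLp.sq_of_four {f : Ω → ℝ} (hf : MemLp f 4 μ) :
    MemLp (fun ω => f ω ^ 2) 2 μ := by
  refine (memLp_two_iff_integrable_sq (hf.aestronglyMeasurable.pow 2)).2 ?_
  convert hf.integrable_norm_pow (p := 4) (by norm_num) using 2 with ω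
  rw [Pi.pow_apply, ← pow_mul, Real.norm_eq_abs, Even.pow_abs ⟨2, rfl⟩]

lemma integral_add_sq_of_integral_mul_eq_zero {f g : Ω → ℝ} (hf : MemLp f 2 μ)
    (hg : MemLp g 2 μ) (hfg : ∫ ω, f ω * g ω ∂μ = 0) :
    ∫ ω, (f ω + g ω) ^ 2 ∂μ = ∫ ω, f ω ^ 2 ∂μ + ∫ ω, g ω ^ 2 ∂μ := by
  have hsq : Integrable (fun ω => f ω ^ 2 + g ω ^ 2) μ := hf.integrable_sq.add hg.integrable_sq
  have hmul : Integrable (fun ω => 2 * (f ω * g ω)) μ := (hf.integrable_mul hg).const_mul 2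
  simp_rw [add_sq', mul_assoc]
  rw [integral_add hsq hmul, integral_add hf.integrable_sq hg.integrable_sq, integral_const_mul,
    hfg, mul_zero, add_zero]

lemma ProbabilityTheory.IndepFun.memLp_two_mul {f g : Ω → ℝ} (hfg : IndepFun f g μ)
    (hf : MemLp f 2 μ) (hg : MemLp g 2 μ) : MemLp (f * g) 2 μ := by
  refine (memLp_two_iff_integrable_sq (hf.1.mul hg.1)).2 ?_
  simp_rw [Pi.mul_apply, mul_pow]
  exact (hfg.comp (measurable_id.pow_const 2) (measurable_id.pow_const 2)).integrable_mul
    hf.integrable_sq hg.integrable_sq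

lemma covariance_eq_ite_of_iIndepFun [DecidableEq ι] {X : ι → Ω → ℝ}
    (hX : ∀ i, MemLp (X i) 2 μ) (hind : iIndepFun X μ) (k l : ι) :
    cov[X k, X l; μ] = if k = l then Var[X k; μ] else 0 := by
  split_ifs with h
  · subst h
    exact covariance_self (hX k).aemeasurable
  · exact (hind.indepFun h).covariance_eq_zero (hX k) (hX l)

variable [Fintype ι]

lemma memLp_mulVec_apply {p : ENNReal} {X : ι → Ω → ℝ} (hX : ∀ i, MemLp (X i) p μ)
    (A : Matrix ι ι ℝ) (i : ι) : MemLp (fun ω => (A *ᵥ (X · ω)) i) p μ :=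
  memLp_finsetSum _ fun k _ => (hX k).const_mul _

lemma ProbabilityTheory.IndepFun.mulVec {U W : ι → Ω → ℝ}
    (hUW : IndepFun (fun ω i => U i ω) (fun ω i => W i ω) μ) (A B : Matrix ι ι ℝ) :
    IndepFun (fun ω i => (A *ᵥ (U · ω)) i) (fun ω i => (B *ᵥ (W · ω)) i) μ :=
  hUW.comp (φ := (A *ᵥ ·)) (ψ := (B *ᵥ ·)) (by fun_prop) (by fun_prop)

lemma integral_sum_mul_eq_zero_of_indepFun {a b : ι → Ω → ℝ} (hab : ∀ i, IndepFun (a i) (b i) μ)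
    (ha : ∀ i, Integrable (a i) μ) (hb : ∀ i, Integrable (b i) μ) (hb0 : ∀ i, μ[b i] = 0) :
    ∫ ω, ∑ i, a i ω * b i ω ∂μ = 0 := by
  rw [integral_finsetSum (f := fun i ω => a i ω * b i ω) _
    fun i _ => (hab i).integrable_mul (ha i) (hb i)]
  refine Finset.sum_eq_zero fun i _ => ?_
  rw [(hab i).integral_fun_mul_eq_mul_integral (ha i).1 (hb i).1, hb0, mul_zero]

lemma memLp_two_sum_mul_of_indepFun {f g : ι → Ω → ℝ} (hf : ∀ i, MemLp (f i) 2 μ)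
    (hg : ∀ i, MemLp (g i) 2 μ) (hfg : IndepFun (fun ω i => f i ω) (fun ω i => g i ω) μ) :
    MemLp (fun ω => ∑ i, f i ω * g i ω) 2 μ :=
  memLp_finsetSum _ fun i _ => (hfg.comp (φ := fun x : ι → ℝ => x i)
    (ψ := fun x : ι → ℝ => x i) (by fun_prop) (by fun_prop)).memLp_two_mul (hf i) (hg i)

lemma integral_sum_mul_sq_of_indepFun {f g : ι → Ω → ℝ} (hf : ∀ i, MemLp (f i) 2 μ)
    (hg : ∀ i, MemLp (g i) 2 μ) (hfg : IndepFun (fun ω i => f i ω) (fun ω i => g i ω) μ) :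
    ∫ ω, (∑ i, f i ω * g i ω) ^ 2 ∂μ
      = ∑ i, ∑ j, (∫ ω, f i ω * f j ω ∂μ) * ∫ ω, g i ω * g j ω ∂μ := by
  have hind : ∀ i j, IndepFun (f i * f j) (g i * g j) μ := fun i j =>
    hfg.comp (φ := fun x : ι → ℝ => x i * x j) (ψ := fun x : ι → ℝ => x i * x j)
      (by fun_prop) (by fun_prop)
  have hint : ∀ i j, Integrable (fun ω => f i ω * f j ω * (g i ω * g j ω)) μ := fun i j =>
    (hind i j).integrable_mul ((hf i).integrable_mul (hf j)) ((hg i).integrable_mul (hg j))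
  have hexpand : ∀ ω, (∑ i, f i ω * g i ω) ^ 2
      = ∑ i, ∑ j, f i ω * f j ω * (g i ω * g j ω) := by
    intro ω
    rw [sq, Finset.sum_mul_sum]
    congr! 2 with i _ j _
    ring
  simp_rw [hexpand]
  rw [integral_finsetSum _ fun i _ => integrable_finsetSum _ fun j _ => hint i j]
  refine Finset.sum_congr rfl fun i _ => ?_
  rw [integral_finsetSum _ fun j _ => hint i j]
  refine Finset.sum_congr rfl fun j _ => ?_
  exact (hind i j).integral_fun_mul_eq_mul_integral ((hf i).1.mul (hf j).1)
    ((hg i).1.mul (hg j).1)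

variable [DecidableEq ι]

lemma integral_sum_mul_sum_of_covariance_eq_ite [IsProbabilityMeasure μ]
    {Y : ι → Ω → ℝ} {m v : ℝ} (hY : ∀ k, MemLp (Y k) 2 μ) (hmean : ∀ k, μ[Y k] = m)
    (hcov : ∀ k l, cov[Y k, Y l; μ] = if k = l then v else 0) (a b : ι → ℝ) :
    ∫ ω, (∑ k, a k * Y k ω) * (∑ l, b l * Y l ω) ∂μ
      = v * ∑ k, a k * b k + (m * ∑ k, a k) * (m * ∑ l, b l) := by
  have hlin : ∀ c : ι → ℝ, MemLp (fun ω => ∑ k, c k * Y k ω) 2 μ := fun c =>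
    memLp_finsetSum _ fun k _ => (hY k).const_mul (c k)
  have hlin_mean : ∀ c : ι → ℝ, μ[fun ω => ∑ k, c k * Y k ω] = m * ∑ k, c k := by
    intro c
    rw [integral_finsetSum _ fun k _ => ((hY k).const_mul (c k)).integrable one_le_two]
    simp only [integral_const_mul, hmean, ← Finset.sum_mul, mul_comm m]
  have hlin_cov :
      cov[fun ω => ∑ k, a k * Y k ω, fun ω => ∑ l, b l * Y l ω; μ] = v * ∑ k, a k * b k := by
    rw [covariance_fun_sum_fun_sum (fun k => (hY k).const_mul (a k))
      (fun l => (hY l).const_mul (b l))]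
    simp only [covariance_const_mul_left, covariance_const_mul_right, hcov, mul_ite, mul_zero,
      Finset.sum_ite_eq, Finset.mem_univ, if_true, Finset.mul_sum]
    exact Finset.sum_congr rfl fun k _ => by ring
  rw [← hlin_cov, ← hlin_mean a, ← hlin_mean b, covariance_eq_sub (hlin a) (hlin b)]
  simp

lemma integral_centeringMatrix_mulVec_apply {X : ι → Ω → ℝ} {m : ℝ}
    (hX : ∀ k, Integrable (X k) μ) (hmean : ∀ k, μ[X k] = m) (i : ι) :
    ∫ ω, (centeringMatrix ι *ᵥ (X · ω)) i ∂μ = 0 := by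
  have : Nonempty ι := ⟨i⟩
  simp only [Matrix.mulVec, dotProduct]
  rw [integral_finsetSum _ fun k _ => (hX k).const_mul _]
  simp only [integral_const_mul, hmean, ← Finset.sum_mul, sum_centeringMatrix_apply, zero_mul]

lemma integral_centeringMatrix_mulVec_mul_of_iid [IsProbabilityMeasure μ] {X : ι → Ω → ℝ}
    (hX : ∀ i, MemLp (X i) 2 μ) (hind : iIndepFun X μ)
    (hid : ∀ i j, IdentDistrib (X i) (X j) μ μ) (i₀ i j : ι) :
    ∫ ω, (centeringMatrix ι *ᵥ (X · ω)) i * (centeringMatrix ι *ᵥ (X · ω)) j ∂μ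
      = Var[X i₀; μ] * centeringMatrix ι i j := by
  have : Nonempty ι := ⟨i₀⟩
  have hcov : ∀ k l, cov[X k, X l; μ] = if k = l then Var[X i₀; μ] else 0 := fun k l => by
    rw [covariance_eq_ite_of_iIndepFun hX hind, (hid k i₀).variance_eq]
  have hPPt : ∑ k, centeringMatrix ι i k * centeringMatrix ι j k = centeringMatrix ι i j :=
    calc _ = (centeringMatrix ι * (centeringMatrix ι)ᵀ) i j := rfl
      _ = _ := by rw [centeringMatrix_transpose, centeringMatrix_mul_self]
  simp only [Matrix.mulVec, dotProduct]
  rw [integral_sum_mul_sum_of_covariance_eq_ite hX (fun k => (hid k i₀).integral_eq) hcov,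
    sum_centeringMatrix_apply, sum_centeringMatrix_apply, hPPt]
  ring

variable {U W : ι → Ω → ℝ}

lemma integral_sum_centeringMatrix_mulVec_mul_sq [IsProbabilityMeasure μ] (i₀ : ι)
    (hU : ∀ i, MemLp (U i) 2 μ) (hW : ∀ i, MemLp (W i) 2 μ)
    (hUind : iIndepFun U μ) (hWind : iIndepFun W μ)
    (hUid : ∀ i j, IdentDistrib (U i) (U j) μ μ) (hWid : ∀ i j, IdentDistrib (W i) (W j) μ μ)
    (hUW : IndepFun (fun ω i => U i ω) (fun ω i => W i ω) μ) :
    ∫ ω, (∑ i, (centeringMatrix ι *ᵥ (U · ω)) i * (centeringMatrix ι *ᵥ (W · ω)) i) ^ 2 ∂μ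
      = (Fintype.card ι - 1) * (Var[U i₀; μ] * Var[W i₀; μ]) := by
  have : Nonempty ι := ⟨i₀⟩
  rw [integral_sum_mul_sq_of_indepFun (memLp_mulVec_apply hU _) (memLp_mulVec_apply hW _)
    (hUW.mulVec _ _)]
  simp_rw [integral_centeringMatrix_mulVec_mul_of_iid hU hUind hUid i₀,
    integral_centeringMatrix_mulVec_mul_of_iid hW hWind hWid i₀]
  calc _ = Var[U i₀; μ] * Var[W i₀; μ] * ∑ i, ∑ j, centeringMatrix ι i j ^ 2 := by
        simp only [Finset.mul_sum]
        exact Finset.sum_congr rfl fun i _ => Finset.sum_congr rfl fun j _ => by ring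
    _ = _ := by rw [sum_sum_centeringMatrix_apply_sq]; ring

lemma integral_sum_sq_mul_sum_centeringMatrix_mulVec_eq_zero [IsProbabilityMeasure μ] {m : ℝ}
    (hU : ∀ i, MemLp (U i) 4 μ) (hW : ∀ i, Integrable (W i) μ) (hmean : ∀ i, μ[W i] = m)
    (hUW : IndepFun (fun ω i => U i ω) (fun ω i => W i ω) μ) :
    ∫ ω, (∑ j, (centeringMatrix ι *ᵥ (U · ω)) j ^ 2)
      * ∑ i, (centeringMatrix ι *ᵥ (U · ω)) i * (centeringMatrix ι *ᵥ (W · ω)) i ∂μ = 0 := by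
  have hB : ∀ i, MemLp (fun ω => (centeringMatrix ι *ᵥ (U · ω)) i) 4 μ :=
    memLp_mulVec_apply hU _
  have hS : MemLp (fun ω => ∑ j, (centeringMatrix ι *ᵥ (U · ω)) j ^ 2) 2 μ :=
    memLp_finsetSum _ fun j _ => (hB j).sq_of_four
  simp_rw [Finset.mul_sum, ← mul_assoc]
  refine integral_sum_mul_eq_zero_of_indepFun (fun i => ?_)
    (fun i => hS.integrable_mul ((hB i).mono_exponent (by norm_num : (2 : ENNReal) ≤ 4)))
    (fun i => memLp_one_iff_integrable.1
      (memLp_mulVec_apply (fun k => memLp_one_iff_integrable.2 (hW k)) _ i))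
    (integral_centeringMatrix_mulVec_apply hW hmean)
  exact hUW.comp (φ := fun x => (∑ j, (centeringMatrix ι *ᵥ x) j ^ 2) * (centeringMatrix ι *ᵥ x) i)
    (ψ := fun x => (centeringMatrix ι *ᵥ x) i) (by fun_prop) (by fun_prop)

lemma le_integral_sq_sum_sq_add_sum_centeringMatrix_mulVec_mul [IsProbabilityMeasure μ] (i₀ : ι)
    (hU : ∀ i, MemLp (U i) 4 μ) (hW : ∀ i, MemLp (W i) 2 μ)
    (hUind : iIndepFun U μ) (hWind : iIndepFun W μ)
    (hUid : ∀ i j, IdentDistrib (U i) (U j) μ μ) (hWid : ∀ i j, IdentDistrib (W i) (W j) μ μ)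
    (hUW : IndepFun (fun ω i => U i ω) (fun ω i => W i ω) μ) :
    (Fintype.card ι - 1) * (Var[U i₀; μ] * Var[W i₀; μ])
      ≤ ∫ ω, (∑ i, (centeringMatrix ι *ᵥ (U · ω)) i ^ 2
          + ∑ i, (centeringMatrix ι *ᵥ (U · ω)) i * (centeringMatrix ι *ᵥ (W · ω)) i) ^ 2 ∂μ := by
  have hU2 : ∀ i, MemLp (U i) 2 μ := fun i => (hU i).mono_exponent (by norm_num)
  have hS : MemLp (fun ω => ∑ i, (centeringMatrix ι *ᵥ (U · ω)) i ^ 2) 2 μ :=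
    memLp_finsetSum _ fun i _ => (memLp_mulVec_apply hU _ i).sq_of_four
  have hX := memLp_two_sum_mul_of_indepFun (memLp_mulVec_apply hU2 (centeringMatrix ι))
    (memLp_mulVec_apply hW (centeringMatrix ι)) (hUW.mulVec _ _)
  have hSX := integral_sum_sq_mul_sum_centeringMatrix_mulVec_eq_zero hU
    (fun i => (hW i).integrable one_le_two) (fun i => (hWid i i₀).integral_eq) hUW
  rw [integral_add_sq_of_integral_mul_eq_zero hS hX hSX,
    ← integral_sum_centeringMatrix_mulVec_mul_sq i₀ hU2 hW hUind hWind hUid hWid hUW]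
  exact le_add_of_nonneg_left (integral_nonneg fun ω => sq_nonneg _)

end SecondMoments

/-- For `N ≥ 2`, i.i.d. `U₁,…,U_N` with `E(U₁⁴) < ∞` and i.i.d. square-integrable
`W₁,…,W_N` with `(U₁,…,U_N)` independent of `(W₁,…,W_N)`, setting
`Bᵢ = Uᵢ − Ū`, `Cᵢ = Wᵢ − W̄` and `T = (1/(N−1)) ∑ᵢ (Bᵢ + Cᵢ)·Bᵢ`, it holds that
`E(T²) ≥ (1/(N−1))·Var(U₁)·Var(W₁)`, where `Var(V) = E(V²) − (E V)²`. -/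
theorem stmt10 {Ω : Type*} [MeasurableSpace Ω]
    (μ : Measure Ω) [IsProbabilityMeasure μ]
    (N : ℕ) (hN : 2 ≤ N)
    (U W : Fin N → Ω → ℝ)
    (hUiid : iIndepFun U μ)
    (hUid : ∀ i j, IdentDistrib (U i) (U j) μ μ)
    (hWiid : iIndepFun W μ)
    (hWid : ∀ i j, IdentDistrib (W i) (W j) μ μ)
    (hU4 : MemLp (U (⟨0, by omega⟩ : Fin N)) 4 μ)
    (hW2 : ∀ i, MemLp (W i) 2 μ)
    (hUW : IndepFun (fun ω i => U i ω) (fun ω i => W i ω) μ)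
    (T : Ω → ℝ)
    (hT : T = fun ω => ((N : ℝ) - 1)⁻¹ *
      ∑ i, ((U i ω - (N : ℝ)⁻¹ * ∑ j, U j ω) + (W i ω - (N : ℝ)⁻¹ * ∑ j, W j ω)) *
        (U i ω - (N : ℝ)⁻¹ * ∑ j, U j ω)) :
    ((N : ℝ) - 1)⁻¹ *
        ((∫ ω, (U (⟨0, by omega⟩ : Fin N) ω) ^ 2 ∂μ -
            (∫ ω, U (⟨0, by omega⟩ : Fin N) ω ∂μ) ^ 2) *
          (∫ ω, (W (⟨0, by omega⟩ : Fin N) ω) ^ 2 ∂μ -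
            (∫ ω, W (⟨0, by omega⟩ : Fin N) ω ∂μ) ^ 2)) ≤
      ∫ ω, T ω ^ 2 ∂μ := by
  have hN1 : (N : ℝ) - 1 ≠ 0 := by
    have : (2 : ℝ) ≤ N := by exact_mod_cast hN
    linarith
  have hU4' : ∀ i, MemLp (U i) 4 μ := fun i => (hUid _ i).memLp_snd hU4
  have hT' : ∀ ω, T ω = ((N : ℝ) - 1)⁻¹ * (∑ i, (centeringMatrix (Fin N) *ᵥ (U · ω)) i ^ 2
      + ∑ i, (centeringMatrix (Fin N) *ᵥ (U · ω)) i * (centeringMatrix (Fin N) *ᵥ (W · ω)) i) := by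
    intro ω
    subst hT
    simp only [centeringMatrix_mulVec_apply, Fintype.card_fin, ← Finset.sum_add_distrib]
    congr! 2 with i
    ring
  have hVar : ∀ Y : Ω → ℝ, MemLp Y 2 μ → ∫ ω, Y ω ^ 2 ∂μ - (∫ ω, Y ω ∂μ) ^ 2 = Var[Y; μ] :=
    fun Y hY => (variance_eq_sub hY).symm
  have hbound := le_integral_sq_sum_sq_add_sum_centeringMatrix_mulVec_mul ⟨0, by omega⟩ hU4' hW2
    hUiid hWiid hUid hWid hUW
  rw [Fintype.card_fin] at hbound
  rw [hVar _ (hU4.mono_exponent (by norm_num)), hVar _ (hW2 _)]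
  calc _ = ((N : ℝ) - 1)⁻¹ ^ 2
        * (((N : ℝ) - 1) * (Var[U ⟨0, by omega⟩; μ] * Var[W ⟨0, by omega⟩; μ])) := by
        field_simp
    _ ≤ ∫ ω, T ω ^ 2 ∂μ := by
        simp_rw [hT', mul_pow]
        rw [integral_const_mul]
        gcongr
end

section
/- Let N ∈ ℕ₊, let S ⊆ ℝᴺ be a Borel set with 0 < λ(S) < ∞ for Lebesgue measure λ, and let Y be a random vector uniformly distributed on S. Let B ⊆ S be a Borel set with μ_Y(B) > 0 (where μ_Y is the law of Y), and let X be a random vector with ℙ(X ∈ D) = μ_Y(D ∩ B)/μ_Y(B) for every Borel D. Let ⟨·,·⟩ be an inner product on ℝⁿ with induced norm |·|, let a : ℝᴺ → ℝⁿ be Borel measurable with E(|a(Y)|²) < ∞, let Δ ∈ ℝᴺ, and let A denote the event {X + Δ ∈ S}. Then for every ε > 0, ℙ( A ∩ { |a(X+Δ) − a(X)| ≥ ε } ) ≤ 4·E(|a(Y)|²) / (μ_Y(B)·ε²). -/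
/-! The event `A ∩ {|a(X+Δ) − a(X)| ≥ ε}` forces `ε² ≤ 2|a(X+Δ)|² 𝟙_S(X+Δ) + 2|a(X)|²`, so by
Markov's inequality it suffices to bound the expectations of both terms by `E|a(Y)|² / μ_Y(B)`.
Since the law of `X` is `μ_Y` conditioned on `B`, each is at most `1/μ_Y(B)` times the corresponding
`μ_Y`-integral. For the shifted term, `μ_Y` is Lebesgue measure on `S` normalised, and translation
invariance of Lebesgue measure turns `∫_S |a(x+Δ)|² 𝟙_S(x+Δ) dx` into at most `∫_S |a|²`. -/

open MeasureTheory

/-- The bilinear form on `ℝⁿ` given by the coefficient matrix `a`. -/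
noncomputable def innerMat17 {n : ℕ} (a : Matrix (Fin n) (Fin n) ℝ) (x y : Fin n → ℝ) : ℝ :=
  ∑ i, ∑ j, a i j * x i * y j

open ProbabilityTheory Matrix
open scoped ENNReal

lemma innerMat17_eq_dotProduct_mulVec {n : ℕ} (a : Matrix (Fin n) (Fin n) ℝ) (x y : Fin n → ℝ) :
    innerMat17 a x y = x ⬝ᵥ (a *ᵥ y) := by
  simp [innerMat17, dotProduct, mulVec, Finset.mul_sum, mul_comm, mul_left_comm]

lemma innerMat17_self_nonneg {n : ℕ} {a : Matrix (Fin n) (Fin n) ℝ} (ha : a.PosSemidef)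
    (x : Fin n → ℝ) : 0 ≤ innerMat17 a x x := by
  simpa [innerMat17_eq_dotProduct_mulVec] using ha.dotProduct_mulVec_nonneg x

lemma innerMat17_parallelogram {n : ℕ} (a : Matrix (Fin n) (Fin n) ℝ) (u v : Fin n → ℝ) :
    innerMat17 a (u - v) (u - v) + innerMat17 a (u + v) (u + v) =
      2 * innerMat17 a u u + 2 * innerMat17 a v v := by
  simp only [innerMat17, Finset.mul_sum, ← Finset.sum_add_distrib, Pi.sub_apply, Pi.add_apply]
  exact Finset.sum_congr rfl fun i _ => Finset.sum_congr rfl fun j _ => by ring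

lemma ofReal_sq_le_of_le_sqrt_innerMat17_sub {n : ℕ} {a : Matrix (Fin n) (Fin n) ℝ}
    (ha : a.PosSemidef) {u v : Fin n → ℝ} {ε : ℝ} (hε : 0 ≤ ε)
    (h : ε ≤ √(innerMat17 a (u - v) (u - v))) :
    ENNReal.ofReal (ε ^ 2) ≤
      2 * ENNReal.ofReal (innerMat17 a u u) + 2 * ENNReal.ofReal (innerMat17 a v v) := by
  have hu := innerMat17_self_nonneg ha u
  have hv := innerMat17_self_nonneg ha v
  have hε2 : ε ^ 2 ≤ 2 * innerMat17 a u u + 2 * innerMat17 a v v := by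
    calc ε ^ 2 ≤ innerMat17 a (u - v) (u - v) :=
          (Real.le_sqrt hε (innerMat17_self_nonneg ha _)).mp h
      _ ≤ _ := by linarith [innerMat17_parallelogram a u v, innerMat17_self_nonneg ha (u + v)]
  calc ENNReal.ofReal (ε ^ 2) ≤ ENNReal.ofReal (2 * innerMat17 a u u + 2 * innerMat17 a v v) :=
        ENNReal.ofReal_le_ofReal hε2
    _ = _ := by
      rw [ENNReal.ofReal_add (by positivity) (by positivity), ENNReal.ofReal_mul zero_le_two,
        ENNReal.ofReal_mul zero_le_two, ENNReal.ofReal_ofNat]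

lemma eq_cond_of_apply_eq_div {α : Type*} [MeasurableSpace α] {ρ ν : Measure α} {B : Set α}
    (h : ∀ D, MeasurableSet D → ρ D = ν (D ∩ B) / ν B) : ρ = ν[|B] := by
  ext D hD
  rw [h D hD, cond_apply' hD, Set.inter_comm, ENNReal.div_eq_inv_mul]

lemma lintegral_cond_le {α : Type*} [MeasurableSpace α] (ν : Measure α) (B : Set α)
    (f : α → ℝ≥0∞) : ∫⁻ x, f x ∂ν[|B] ≤ (ν B)⁻¹ * ∫⁻ x, f x ∂ν := by
  rw [ProbabilityTheory.cond, lintegral_smul_measure, smul_eq_mul]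
  gcongr _ * ?_
  exact setLIntegral_le_lintegral _ _

lemma lintegral_indicator_add_right_cond_le {G : Type*} [MeasurableSpace G] [AddGroup G]
    [MeasurableAdd G] (m : Measure G) [m.IsAddRightInvariant] {S : Set G} (hS : MeasurableSet S)
    (f : G → ℝ≥0∞) (Δ : G) :
    ∫⁻ x, S.indicator f (x + Δ) ∂m[|S] ≤ ∫⁻ x, f x ∂m[|S] := by
  rw [ProbabilityTheory.cond, lintegral_smul_measure, lintegral_smul_measure]
  gcongr _ • ?_
  calc ∫⁻ x in S, S.indicator f (x + Δ) ∂m ≤ ∫⁻ x, S.indicator f (x + Δ) ∂m :=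
        setLIntegral_le_lintegral _ _
    _ = ∫⁻ x, S.indicator f x ∂m := lintegral_add_right_eq_self _ Δ
    _ = ∫⁻ x in S, f x ∂m := lintegral_indicator hS f

lemma lintegral_indicator_add_right_add_le_of_map_eq_cond {Ω G : Type*} [MeasurableSpace Ω]
    [MeasurableSpace G] [AddGroup G] [MeasurableAdd G] {μ : Measure Ω} {m ν : Measure G}
    [m.IsAddRightInvariant] {S B : Set G} (hS : MeasurableSet S) (hν : ν = m[|S])
    {X : Ω → G} (hX : Measurable X) (hXlaw : μ.map X = ν[|B])
    {f : G → ℝ≥0∞} (hf : Measurable f) (Δ : G) :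
    ∫⁻ ω, 2 * S.indicator f (X ω + Δ) + 2 * f (X ω) ∂μ ≤ (ν B)⁻¹ * (4 * ∫⁻ x, f x ∂ν) := by
  have hfΔ : Measurable fun x => S.indicator f (x + Δ) :=
    (hf.indicator hS).comp (measurable_add_const Δ)
  rw [← lintegral_map (f := fun x => 2 * S.indicator f (x + Δ) + 2 * f x) (by fun_prop) hX, hXlaw]
  refine (lintegral_cond_le ν B _).trans ?_
  gcongr
  rw [lintegral_add_left (by fun_prop), lintegral_const_mul _ hfΔ, lintegral_const_mul _ hf]
  calc 2 * ∫⁻ x, S.indicator f (x + Δ) ∂ν + 2 * ∫⁻ x, f x ∂ν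
      ≤ 2 * ∫⁻ x, f x ∂ν + 2 * ∫⁻ x, f x ∂ν := by
        gcongr 2 * ?_ + _
        subst hν
        exact lintegral_indicator_add_right_cond_le m hS f Δ
    _ = 4 * ∫⁻ x, f x ∂ν := by ring

lemma toReal_le_div_of_ofReal_mul_le {p b : ℝ≥0∞} {c I : ℝ} (hc : 0 < c) (hI : 0 ≤ I)
    (hb₀ : b ≠ 0) (hb : b ≠ ⊤) (h : ENNReal.ofReal c * p ≤ b⁻¹ * ENNReal.ofReal I) :
    p.toReal ≤ I / (b.toReal * c) := by
  have hreal := ENNReal.toReal_mono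
    (ENNReal.mul_ne_top (ENNReal.inv_ne_top.mpr hb₀) ENNReal.ofReal_ne_top) h
  rw [ENNReal.toReal_mul, ENNReal.toReal_mul, ENNReal.toReal_inv, ENNReal.toReal_ofReal hc.le,
    ENNReal.toReal_ofReal hI] at hreal
  have hb' : 0 < b.toReal := ENNReal.toReal_pos hb₀ hb
  rw [le_div_iff₀ (mul_pos hb' hc)]
  calc p.toReal * (b.toReal * c) = b.toReal * (c * p.toReal) := by ring
    _ ≤ b.toReal * (b.toReal⁻¹ * I) := by gcongr
    _ = I := by field_simp

theorem stmt17_general {Ω : Type*} [MeasurableSpace Ω]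
    (μ : Measure Ω) [IsProbabilityMeasure μ]
    (N n : ℕ)
    (S : Set (Fin N → ℝ)) (hS : MeasurableSet S)
    (Y X : Ω → Fin N → ℝ) (hY : Measurable Y) (hX : Measurable X)
    (hYunif : ∀ D : Set (Fin N → ℝ), MeasurableSet D →
      Measure.map Y μ D = volume (D ∩ S) / volume S)
    (B : Set (Fin N → ℝ))
    (hBpos : 0 < Measure.map Y μ B)
    (hXdist : ∀ D : Set (Fin N → ℝ), MeasurableSet D →
      Measure.map X μ D = Measure.map Y μ (D ∩ B) / Measure.map Y μ B)
    (a : Matrix (Fin n) (Fin n) ℝ) (hpos : a.PosDef)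
    (aF : (Fin N → ℝ) → Fin n → ℝ) (haF : Measurable aF)
    (haInt : Integrable (fun ω => innerMat17 a (aF (Y ω)) (aF (Y ω))) μ)
    (Δ : Fin N → ℝ) :
    ∀ ε : ℝ, 0 < ε →
      (μ ({ω | X ω + Δ ∈ S} ∩
          {ω | ε ≤ Real.sqrt
            (innerMat17 a (aF (X ω + Δ) - aF (X ω)) (aF (X ω + Δ) - aF (X ω)))})).toReal ≤
        4 * (∫ ω, innerMat17 a (aF (Y ω)) (aF (Y ω)) ∂μ) /
          ((Measure.map Y μ B).toReal * ε ^ 2) := by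
  intro ε hε
  set ν := μ.map Y
  set I := ∫ ω, innerMat17 a (aF (Y ω)) (aF (Y ω)) ∂μ
  set f : (Fin N → ℝ) → ℝ≥0∞ := fun x => ENNReal.ofReal (innerMat17 a (aF x) (aF x))
  have hf : Measurable f := by unfold f innerMat17; fun_prop
  have hq := innerMat17_self_nonneg hpos.posSemidef
  have hfν : ∫⁻ x, f x ∂ν = ENNReal.ofReal I := by
    rw [lintegral_map hf hY, ofReal_integral_eq_lintegral_ofReal haInt (ae_of_all _ fun _ => hq _)]
  have hevent : {ω | X ω + Δ ∈ S} ∩ {ω | ε ≤ √(innerMat17 a (aF (X ω + Δ) - aF (X ω))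
      (aF (X ω + Δ) - aF (X ω)))} ⊆
      {ω | ENNReal.ofReal (ε ^ 2) ≤ 2 * S.indicator f (X ω + Δ) + 2 * f (X ω)} := by
    rintro ω ⟨hshift, hle⟩
    simpa [Set.indicator_of_mem (show X ω + Δ ∈ S from hshift) f] using
      ofReal_sq_le_of_le_sqrt_innerMat17_sub hpos.posSemidef hε.le hle
  refine toReal_le_div_of_ofReal_mul_le (by positivity)
    (mul_nonneg zero_le_four (integral_nonneg fun _ => hq _)) hBpos.ne' (measure_ne_top ν B) ?_
  calc ENNReal.ofReal (ε ^ 2) * μ _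
      ≤ ENNReal.ofReal (ε ^ 2) *
          μ {ω | ENNReal.ofReal (ε ^ 2) ≤ 2 * S.indicator f (X ω + Δ) + 2 * f (X ω)} :=
        by gcongr
    _ ≤ ∫⁻ ω, 2 * S.indicator f (X ω + Δ) + 2 * f (X ω) ∂μ :=
        mul_meas_ge_le_lintegral₀ (by fun_prop) _
    _ ≤ (ν B)⁻¹ * (4 * ∫⁻ x, f x ∂ν) :=
        lintegral_indicator_add_right_add_le_of_map_eq_cond hS (eq_cond_of_apply_eq_div hYunif)
          hX (eq_cond_of_apply_eq_div hXdist) hf Δ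
    _ = (ν B)⁻¹ * ENNReal.ofReal (4 * I) := by
        rw [hfν, ENNReal.ofReal_mul zero_le_four, ENNReal.ofReal_ofNat]

/-- For `Y` uniform on a Borel set `S ⊆ ℝᴺ` with `0 < λ(S) < ∞`, `B ⊆ S` Borel
with `μ_Y(B) > 0`, `X` with law the normalized restriction of `μ_Y` to `B`,
an inner product on `ℝⁿ` (given by a symmetric positive definite matrix) with
norm `|x| = √⟨x,x⟩`, `a : ℝᴺ → ℝⁿ` Borel with `E(|a(Y)|²) < ∞`, `Δ ∈ ℝᴺ` and
`A = {X + Δ ∈ S}`: for every `ε > 0`,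
`ℙ(A ∩ {|a(X+Δ) − a(X)| ≥ ε}) ≤ 4·E(|a(Y)|²)/(μ_Y(B)·ε²)`. -/
theorem stmt17 {Ω : Type*} [MeasurableSpace Ω]
    (μ : Measure Ω) [IsProbabilityMeasure μ]
    (N n : ℕ) (hN : 0 < N) (hn : 0 < n)
    (S : Set (Fin N → ℝ)) (hS : MeasurableSet S)
    (hSpos : 0 < volume S) (hSfin : volume S < ⊤)
    (Y X : Ω → Fin N → ℝ) (hY : Measurable Y) (hX : Measurable X)
    (hYunif : ∀ D : Set (Fin N → ℝ), MeasurableSet D →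
      Measure.map Y μ D = volume (D ∩ S) / volume S)
    (B : Set (Fin N → ℝ)) (hBmeas : MeasurableSet B) (hBS : B ⊆ S)
    (hBpos : 0 < Measure.map Y μ B)
    (hXdist : ∀ D : Set (Fin N → ℝ), MeasurableSet D →
      Measure.map X μ D = Measure.map Y μ (D ∩ B) / Measure.map Y μ B)
    (a : Matrix (Fin n) (Fin n) ℝ) (hsymm : a.IsSymm) (hpos : a.PosDef)
    (aF : (Fin N → ℝ) → Fin n → ℝ) (haF : Measurable aF)
    (haInt : Integrable (fun ω => innerMat17 a (aF (Y ω)) (aF (Y ω))) μ)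
    (Δ : Fin N → ℝ) :
    ∀ ε : ℝ, 0 < ε →
      (μ ({ω | X ω + Δ ∈ S} ∩
          {ω | ε ≤ Real.sqrt
            (innerMat17 a (aF (X ω + Δ) - aF (X ω)) (aF (X ω + Δ) - aF (X ω)))})).toReal ≤
        4 * (∫ ω, innerMat17 a (aF (Y ω)) (aF (Y ω)) ∂μ) /
          ((Measure.map Y μ B).toReal * ε ^ 2) :=
  stmt17_general μ N n S hS Y X hY hX hYunif B hBpos hXdist a hpos aF haF haInt Δ
end
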